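/- arXiv:1206.3053 — 5 statements merged into one kernel-verified Lean document; each statement's English description precedes it below -/
import Mathlib

section
/- Let G be a locally compact abelian Polish group with translation-invariant metric, T an ergodic automorphism of (X,μ), and Fₙ : X → G measurable with (Fₙ)_*μ → P weakly and Fₙ∘T - Fₙ → 0 in measure. Then for every continuous bounded φ on G (extending continuously to the one-point compactification), every measurable h : X → G, and every j ∈ L¹(μ): ∫ φ(Fₙ(x)+h(x)) j(x) dμ(x) → ∫∫ φ(g+h(x)) j(x) dP(g) dμ(x). -/
/-!
Write `aₙ(ψ, g) = ∫ ψ(Fₙ x) g(x) dμ`. Because `Fₙ ∘ T - Fₙ → 0` in measure and `ψ` is uniformly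
continuous, `aₙ(ψ, k ∘ T - k) → 0` for every integrable `k`. For `m > 0`, `A_m g - g` is such a
coboundary (`A_m` the Birkhoff average), and by the L¹ mean ergodic theorem `A_m g` is L¹-close to
the constant `∫ g`; since `|aₙ(ψ, ·)| ≤ ‖ψ‖ ‖·‖₁`, the limit of `aₙ(ψ, g)` is that of
`(∫ g) ∫ ψ(Fₙ) dμ`, namely `(∫ ψ dP)(∫ g)`. For a simple `h` one applies this on each level set of
`h` with `ψ = φ(· + c)`. A general `h` is a limit in measure of simple functions `sₖ`, and since
`φ` restricted to `G` is uniformly continuous (it has a limit at infinity), `aₙ` at `h` and at `sₖ`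
differ by an amount that is small uniformly in `n`.
-/

open MeasureTheory Filter Topology BoundedContinuousFunction

theorem tendsto_of_forall_exists_approx {α : Type*} {l : Filter α} {u : α → ℝ} {ℓ : ℝ}
    (h : ∀ ε > 0, ∃ v : α → ℝ, ∃ L, Tendsto v l (𝓝 L) ∧ |L - ℓ| ≤ ε ∧ ∀ a, |u a - v a| ≤ ε) :
    Tendsto u l (𝓝 ℓ) := by
  refine Metric.tendsto_nhds.2 fun ε hε => ?_
  obtain ⟨v, L, hv, hL, huv⟩ := h (ε / 3) (by positivity)
  filter_upwards [Metric.tendsto_nhds.1 hv (ε / 3) (by positivity)] with a ha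
  rw [Real.dist_eq] at ha ⊢
  calc |u a - ℓ| ≤ |u a - v a| + |v a - L| + |L - ℓ| := by
        linarith [abs_sub_le (u a) (v a) L, abs_sub_le (u a) L ℓ]
    _ < ε := by linarith [huv a]

theorem dist_sub_zero_of_dist_add_right {G : Type*} [AddGroup G] [PseudoMetricSpace G]
    (hdist : ∀ a b c : G, dist (a + c) (b + c) = dist a b) (a b : G) :
    dist (a - b) 0 = dist a b := by
  simpa using (hdist (a - b) 0 b).symm

namespace MeasureTheory

variable {X ι : Type*} [MeasurableSpace X] {μ : Measure X} {l : Filter ι}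

theorem tendstoInMeasure_dist_iff {Y : Type*} [PseudoMetricSpace Y] {u v : ι → X → Y} :
    TendstoInMeasure μ (fun i x => dist (u i x) (v i x)) l 0 ↔
      ∀ ε > 0, Tendsto (fun i => μ {x | ε ≤ dist (u i x) (v i x)}) l (𝓝 0) := by
  simp [tendstoInMeasure_iff_dist, abs_of_nonneg dist_nonneg]

theorem TendstoInMeasure.sub_comp_of_uniformContinuous {Y : Type*} [PseudoMetricSpace Y]
    {ψ : Y → ℝ} (hψ : UniformContinuous ψ) {u v : ι → X → Y}
    (huv : TendstoInMeasure μ (fun i x => dist (u i x) (v i x)) l 0) :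
    TendstoInMeasure μ (fun i x => ψ (u i x) - ψ (v i x)) l 0 := by
  rw [tendstoInMeasure_dist_iff] at huv
  refine tendstoInMeasure_iff_dist.2 fun ε hε => ?_
  obtain ⟨δ, hδ, hψδ⟩ := Metric.uniformContinuous_iff.1 hψ ε hε
  refine tendsto_of_tendsto_of_tendsto_of_le_of_le tendsto_const_nhds (huv δ hδ)
    (fun _ => zero_le) fun i => measure_mono fun x hx => ?_
  by_contra hlt
  have := hψδ (not_le.1 hlt)
  rw [Real.dist_eq] at this
  simp only [Set.mem_ofPred_eq, Pi.zero_apply, Real.dist_eq, sub_zero] at hx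
  linarith

theorem TendstoInMeasure.tendsto_integral_mul [l.IsCountablyGenerated] {w : ι → X → ℝ} {C : ℝ}
    (hw : TendstoInMeasure μ w l 0) (hwm : ∀ i, AEStronglyMeasurable (w i) μ)
    (hC : ∀ i x, |w i x| ≤ C) {j : X → ℝ} (hj : Integrable j μ) :
    Tendsto (fun i => ∫ x, w i x * j x ∂μ) l (𝓝 0) := by
  refine tendsto_of_subseq_tendsto fun ns hns => ?_
  obtain ⟨ms, -, hms⟩ := (hw.comp hns).exists_seq_tendsto_ae
  refine ⟨ms, ?_⟩
  simpa using tendsto_integral_of_dominated_convergence (f := fun _ => 0) (fun x => C * |j x|)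
    (fun k => (hwm _).mul hj.1) (hj.abs.const_mul C)
    (fun k => ae_of_all _ fun x => by
      rw [Pi.mul_apply, Real.norm_eq_abs, abs_mul]
      exact mul_le_mul_of_nonneg_right (hC _ _) (abs_nonneg _))
    (hms.mono fun x hx => by simpa using hx.mul_const (j x))

theorem TendstoInMeasure.dist_of_sub {G : Type*} [AddGroup G] [PseudoMetricSpace G]
    (hdist : ∀ a b c : G, dist (a + c) (b + c) = dist a b) {u v : ι → X → G}
    (huv : TendstoInMeasure μ (fun i x => u i x - v i x) l 0) :
    TendstoInMeasure μ (fun i x => dist (u i x) (v i x)) l 0 := by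
  rw [tendstoInMeasure_dist_iff]
  simpa [tendstoInMeasure_iff_dist, dist_sub_zero_of_dist_add_right hdist] using huv

section Birkhoff

variable {T : X → X}

theorem MeasurePreserving.integral_comp_of_aestronglyMeasurable {Y E : Type*}
    [MeasurableSpace Y] [NormedAddCommGroup E] [NormedSpace ℝ E] {ν : Measure Y} {f : X → Y}
    (hf : MeasurePreserving f μ ν) {g : Y → E} (hg : AEStronglyMeasurable g ν) :
    ∫ x, g (f x) ∂μ = ∫ y, g y ∂ν := by
  rw [← integral_map hf.aemeasurable (hf.map_eq ▸ hg), hf.map_eq]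

theorem MeasurePreserving.integrable_birkhoffSum (hT : MeasurePreserving T μ μ)
    {g : X → ℝ} (hg : Integrable g μ) (m : ℕ) : Integrable (birkhoffSum T g m) μ :=
  integrable_finsetSum _ fun i _ => (hT.iterate i).integrable_comp_of_integrable hg

theorem MeasurePreserving.integrable_birkhoffAverage
    (hT : MeasurePreserving T μ μ) {g : X → ℝ} (hg : Integrable g μ) (m : ℕ) :
    Integrable (birkhoffAverage ℝ T g m) μ :=
  (hT.integrable_birkhoffSum hg m).smul (m : ℝ)⁻¹

theorem MeasurePreserving.integral_birkhoffSum (hT : MeasurePreserving T μ μ)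
    {g : X → ℝ} (hg : Integrable g μ) (m : ℕ) :
    ∫ x, birkhoffSum T g m x ∂μ = m * ∫ x, g x ∂μ := by
  simp only [birkhoffSum]
  rw [integral_finsetSum (f := fun i x => g (T^[i] x)) _
    fun i _ => (hT.iterate i).integrable_comp_of_integrable hg]
  simp [(hT.iterate _).integral_comp_of_aestronglyMeasurable hg.1]

theorem MeasurePreserving.integral_birkhoffAverage (hT : MeasurePreserving T μ μ)
    {g : X → ℝ} (hg : Integrable g μ) {m : ℕ} (hm : m ≠ 0) :
    ∫ x, birkhoffAverage ℝ T g m x ∂μ = ∫ x, g x ∂μ := by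
  simp only [birkhoffAverage, smul_eq_mul]
  rw [integral_const_mul, hT.integral_birkhoffSum hg, inv_mul_cancel_left₀ (by exact_mod_cast hm)]

theorem MeasurePreserving.integral_abs_birkhoffAverage_le
    (hT : MeasurePreserving T μ μ) {g : X → ℝ} (hg : Integrable g μ) (m : ℕ) :
    ∫ x, |birkhoffAverage ℝ T g m x| ∂μ ≤ ∫ x, |g x| ∂μ := by
  rcases eq_or_ne m 0 with rfl | hm
  · simpa using integral_nonneg fun x => abs_nonneg (g x)
  calc ∫ x, |birkhoffAverage ℝ T g m x| ∂μ ≤ ∫ x, birkhoffAverage ℝ T (|g|) m x ∂μ := by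
        refine integral_mono (hT.integrable_birkhoffAverage hg m).abs
          (hT.integrable_birkhoffAverage hg.abs m) fun x => ?_
        simp only [birkhoffAverage, birkhoffSum, smul_eq_mul, abs_mul, abs_inv, Nat.abs_cast]
        gcongr
        exact Finset.abs_sum_le_sum_abs _ _
    _ = ∫ x, |g x| ∂μ := hT.integral_birkhoffAverage hg.abs hm

theorem Lp.coeFn_birkhoffAverage_compMeasurePreserving {p : ENNReal}
    (hT : MeasurePreserving T μ μ) (f : Lp ℝ p μ) (m : ℕ) :
    ((birkhoffAverage ℝ (Lp.compMeasurePreserving T hT) _root_.id m f : Lp ℝ p μ) : X → ℝ)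
      =ᵐ[μ] birkhoffAverage ℝ T f m := by
  simp only [birkhoffAverage, birkhoffSum, id, Lp.compMeasurePreserving_iterate]
  filter_upwards [Lp.coeFn_smul (m : ℝ)⁻¹
      (∑ i ∈ Finset.range m, Lp.compMeasurePreserving T^[i] (hT.iterate i) f),
    Lp.coeFn_finsetSum (Finset.range m) fun i => Lp.compMeasurePreserving T^[i] (hT.iterate i) f,
    ae_all_iff.2 fun i => Lp.coeFn_compMeasurePreserving f (hT.iterate i)] with x h1 h2 h3
  rw [h1, Pi.smul_apply, h2, Finset.sum_apply]
  simp only [h3, Function.comp_apply, birkhoffAverage, birkhoffSum, smul_eq_mul]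

theorem Lp.integral_norm_le_norm [IsProbabilityMeasure μ] (f : Lp ℝ 2 μ) :
    ∫ x, ‖f x‖ ∂μ ≤ ‖f‖ := by
  rw [integral_norm_eq_lintegral_enorm (Lp.aestronglyMeasurable f),
    ← eLpNorm_one_eq_lintegral_enorm, Lp.norm_def]
  exact ENNReal.toReal_mono (Lp.eLpNorm_ne_top f)
    (eLpNorm_le_eLpNorm_of_exponent_le one_le_two (Lp.aestronglyMeasurable f))

theorem Integrable.exists_simpleFunc_integral_abs_sub_lt {g : X → ℝ}
    (hg : Integrable g μ) {ε : ℝ} (hε : 0 < ε) : ∃ b : SimpleFunc X ℝ, ∫ x, |g x - b x| ∂μ < ε := by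
  obtain ⟨b, hgb, hb⟩ := (memLp_one_iff_integrable.2 hg).exists_simpleFunc_eLpNorm_sub_lt
    ENNReal.one_ne_top (ENNReal.ofReal_pos.2 hε).ne'
  refine ⟨b, ?_⟩
  rw [eLpNorm_one_eq_lintegral_enorm, ← ofReal_integral_norm_eq_lintegral_enorm
    (hg.sub (memLp_one_iff_integrable.1 hb)), ENNReal.ofReal_lt_ofReal_iff hε] at hgb
  simpa [Real.norm_eq_abs] using hgb

theorem MeasurePreserving.integral_abs_birkhoffAverage_sub_le
    [IsProbabilityMeasure μ] (hT : MeasurePreserving T μ μ) {g b : X → ℝ} (hg : Integrable g μ)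
    (hb : Integrable b μ) (m : ℕ) :
    ∫ x, |birkhoffAverage ℝ T g m x - ∫ y, g y ∂μ| ∂μ
      ≤ ∫ x, |birkhoffAverage ℝ T b m x - ∫ y, b y ∂μ| ∂μ + 2 * ∫ x, |g x - b x| ∂μ := by
  have hgb := hg.sub hb
  have hpt : ∀ x, |birkhoffAverage ℝ T g m x - ∫ y, g y ∂μ| ≤ |birkhoffAverage ℝ T (g - b) m x|
      + |birkhoffAverage ℝ T b m x - ∫ y, b y ∂μ| + |∫ y, b y ∂μ - ∫ y, g y ∂μ| := fun x => by
    rw [birkhoffAverage_sub, Pi.sub_apply, Pi.sub_apply]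
    exact le_of_eq_of_le (by ring_nf) (abs_add_three _ _ _)
  have hmean : |∫ y, b y ∂μ - ∫ y, g y ∂μ| ≤ ∫ x, |g x - b x| ∂μ := by
    rw [abs_sub_comm, ← integral_sub hg hb]
    exact abs_integral_le_integral_abs
  have hI₁ : Integrable (fun x => |birkhoffAverage ℝ T (g - b) m x|) μ :=
    (hT.integrable_birkhoffAverage hgb m).abs
  have hI₂ : Integrable (fun x => |birkhoffAverage ℝ T b m x - ∫ y, b y ∂μ|) μ :=
    ((hT.integrable_birkhoffAverage hb m).sub (integrable_const _)).abs
  have hsum := integral_add (hI₁.add hI₂) (integrable_const |∫ y, b y ∂μ - ∫ y, g y ∂μ|)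
  simp only [Pi.add_apply] at hsum
  calc ∫ x, |birkhoffAverage ℝ T g m x - ∫ y, g y ∂μ| ∂μ
      ≤ ∫ x, (|birkhoffAverage ℝ T (g - b) m x| + |birkhoffAverage ℝ T b m x - ∫ y, b y ∂μ|
          + |∫ y, b y ∂μ - ∫ y, g y ∂μ|) ∂μ :=
        integral_mono ((hT.integrable_birkhoffAverage hg m).sub (integrable_const _)).abs
          ((hI₁.add hI₂).add (integrable_const _)) hpt
    _ = ∫ x, |birkhoffAverage ℝ T (g - b) m x| ∂μ
          + ∫ x, |birkhoffAverage ℝ T b m x - ∫ y, b y ∂μ| ∂μ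
          + |∫ y, b y ∂μ - ∫ y, g y ∂μ| := by
        simp [hsum, integral_add hI₁ hI₂]
    _ ≤ _ := by
        have := hT.integral_abs_birkhoffAverage_le hgb m
        simp only [Pi.sub_apply] at this
        linarith

theorem MeasurePreserving.exists_integrable_coboundary_eq_birkhoffAverage_sub
    (hT : MeasurePreserving T μ μ) {g : X → ℝ} (hg : Integrable g μ) {m : ℕ} (hm : m ≠ 0) :
    ∃ k : X → ℝ, Integrable k μ ∧ ∀ x, k (T x) - k x = birkhoffAverage ℝ T g m x - g x := by
  refine ⟨fun x => (m : ℝ)⁻¹ * ∑ i ∈ Finset.range m, birkhoffSum T g i x,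
    (integrable_finsetSum _ fun i _ => hT.integrable_birkhoffSum hg i).const_mul _, fun x => ?_⟩
  beta_reduce
  rw [← mul_sub, ← Finset.sum_sub_distrib]
  simp only [birkhoffSum_apply_sub_birkhoffSum]
  rw [Finset.sum_sub_distrib]
  simp [birkhoffAverage, birkhoffSum]
  field_simp

end Birkhoff

theorem SimpleFunc.integral_comp_mul_eq_sum {G : Type*} (s : SimpleFunc X G) (Φ : G → X → ℝ)
    {j : X → ℝ} (hΦ : ∀ c, Integrable (fun x => Φ c x * (s ⁻¹' {c}).indicator j x) μ) :
    ∫ x, Φ (s x) x * j x ∂μ = ∑ c ∈ s.range, ∫ x, Φ c x * (s ⁻¹' {c}).indicator j x ∂μ := by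
  rw [← integral_finsetSum _ fun c _ => hΦ c]
  congr 1 with x
  rw [Finset.sum_eq_single_of_mem (s x) (s.mem_range_self x) fun c _ hc => ?_]
  · simp
  · simp [Set.indicator_of_notMem, Ne.symm hc]

end MeasureTheory

section ErgodicL1

variable {X : Type*} [MeasurableSpace X] {μ : Measure X} [IsProbabilityMeasure μ] {T : X → X}

theorem Ergodic.exists_tendsto_integral_abs_birkhoffAverage_sub
    (hT : Ergodic T μ) {b : X → ℝ} (hb : MemLp b 2 μ) :
    ∃ c : ℝ, Tendsto (fun m => ∫ x, |birkhoffAverage ℝ T b m x - c| ∂μ) atTop (𝓝 0) := by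
  -- von Neumann's theorem for the Koopman operator `U f = f ∘ T` on `L²`; the limit `P` is
  -- `U`-invariant, hence a.e. constant by ergodicity.
  set U := (Lp.compMeasurePreservingₗᵢ ℝ T hT.toMeasurePreserving :
    Lp ℝ 2 μ →ₗᵢ[ℝ] Lp ℝ 2 μ).toContinuousLinearMap
  obtain ⟨P, hconv, hfix⟩ : ∃ P : Lp ℝ 2 μ,
      Tendsto (birkhoffAverage ℝ U _root_.id · (hb.toLp b)) atTop (𝓝 P) ∧ U P = P :=
    ⟨_, U.tendsto_birkhoffAverage_orthogonalProjection
      (LinearIsometry.norm_toContinuousLinearMap_le _) (hb.toLp b),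
      LinearMap.mem_eqLocus.1 (Subtype.prop _)⟩
  have hinv : (P : X → ℝ) ∘ T =ᵐ[μ] P := by
    have h := Lp.coeFn_compMeasurePreserving P hT.toMeasurePreserving
    rw [show Lp.compMeasurePreserving T hT.toMeasurePreserving P = P from hfix] at h
    exact h.symm
  obtain ⟨c, hc⟩ := hT.ae_eq_const_of_ae_eq_comp_ae (Lp.aestronglyMeasurable _) hinv
  refine ⟨c, squeeze_zero (fun m => integral_nonneg fun x => abs_nonneg _) (fun m => ?_)
    (tendsto_iff_norm_sub_tendsto_zero.1 hconv)⟩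
  refine le_of_eq_of_le (integral_congr_ae ?_) (Lp.integral_norm_le_norm _)
  filter_upwards [Lp.coeFn_sub (birkhoffAverage ℝ U _root_.id m (hb.toLp b)) (P : Lp ℝ 2 μ),
    (Lp.coeFn_birkhoffAverage_compMeasurePreserving hT.toMeasurePreserving (hb.toLp b) m :
      ((birkhoffAverage ℝ U _root_.id m (hb.toLp b) : Lp ℝ 2 μ) : X → ℝ) =ᵐ[μ] _),
    hT.toMeasurePreserving.quasiMeasurePreserving.birkhoffAverage_ae_eq_of_ae_eq ℝ
      hb.coeFn_toLp m, hc] with x h1 h2 h3 h4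
  simp only [Real.norm_eq_abs]
  rw [h1, Pi.sub_apply, h4, Function.const_apply, ← h3, ← h2]
  rfl

theorem Ergodic.tendsto_integral_abs_birkhoffAverage_sub_of_memLp
    (hT : Ergodic T μ) {b : X → ℝ} (hb : MemLp b 2 μ) :
    Tendsto (fun m => ∫ x, |birkhoffAverage ℝ T b m x - ∫ y, b y ∂μ| ∂μ) atTop (𝓝 0) := by
  obtain ⟨c, hc⟩ := hT.exists_tendsto_integral_abs_birkhoffAverage_sub hb
  have hbi := hb.integrable one_le_two
  suffices c = ∫ y, b y ∂μ from this ▸ hc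
  have hmean : Tendsto (fun m => ∫ x, birkhoffAverage ℝ T b m x ∂μ) atTop (𝓝 c) := by
    refine tendsto_iff_norm_sub_tendsto_zero.2
      (squeeze_zero (fun _ => norm_nonneg _) (fun m => ?_) hc)
    have hA := hT.toMeasurePreserving.integrable_birkhoffAverage hbi m
    calc ‖∫ x, birkhoffAverage ℝ T b m x ∂μ - c‖
        = ‖∫ x, (birkhoffAverage ℝ T b m x - c) ∂μ‖ := by
          simp [integral_sub hA (integrable_const c)]
      _ ≤ ∫ x, |birkhoffAverage ℝ T b m x - c| ∂μ := norm_integral_le_integral_norm _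
  refine tendsto_nhds_unique hmean (tendsto_const_nhds.congr' ?_)
  filter_upwards [eventually_ne_atTop 0] with m hm
  exact (hT.toMeasurePreserving.integral_birkhoffAverage hbi hm).symm

theorem Ergodic.tendsto_integral_abs_birkhoffAverage_sub
    (hT : Ergodic T μ) {g : X → ℝ} (hg : Integrable g μ) :
    Tendsto (fun m => ∫ x, |birkhoffAverage ℝ T g m x - ∫ y, g y ∂μ| ∂μ) atTop (𝓝 0) := by
  refine tendsto_of_forall_exists_approx fun ε hε => ?_
  obtain ⟨b, hgb⟩ := hg.exists_simpleFunc_integral_abs_sub_lt (by positivity : 0 < ε / 2)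
  have hbi := SimpleFunc.integrable_of_isFiniteMeasure (μ := μ) b
  have hbg : ∫ x, |b x - g x| ∂μ = ∫ x, |g x - b x| ∂μ := by simp_rw [abs_sub_comm]
  refine ⟨_, 0, hT.tendsto_integral_abs_birkhoffAverage_sub_of_memLp
    (b.memLp_of_isFiniteMeasure 2 μ), by simp [hε.le], fun m => abs_sub_le_iff.2 ⟨?_, ?_⟩⟩
  · linarith [hT.toMeasurePreserving.integral_abs_birkhoffAverage_sub_le hg hbi m]
  · linarith [hT.toMeasurePreserving.integral_abs_birkhoffAverage_sub_le hbi hg m, hbg]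

end ErgodicL1

section BoundedIntegrands

variable {X G : Type*} [MeasurableSpace X] {μ : Measure X} [TopologicalSpace G]

theorem BoundedContinuousFunction.integrable_comp_mul [MeasurableSpace G] [OpensMeasurableSpace G]
    (ψ : G →ᵇ ℝ) {f : X → G} (hf : Measurable f) {g : X → ℝ} (hg : Integrable g μ) :
    Integrable (fun x => ψ (f x) * g x) μ :=
  hg.bdd_mul (ψ.continuous.measurable.comp hf).aestronglyMeasurable
    (ae_of_all _ fun x => ψ.norm_coe_le_norm (f x))

theorem BoundedContinuousFunction.abs_integral_comp_mul_le (ψ : G →ᵇ ℝ) {f : X → G}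
    {g : X → ℝ} (hg : Integrable g μ) :
    |∫ x, ψ (f x) * g x ∂μ| ≤ ‖ψ‖ * ∫ x, |g x| ∂μ := by
  calc |∫ x, ψ (f x) * g x ∂μ| ≤ ∫ x, ‖ψ‖ * |g x| ∂μ := by
        refine (Real.norm_eq_abs _).symm.trans_le
          (norm_integral_le_of_norm_le (hg.abs.const_mul _) (ae_of_all _ fun x => ?_))
        rw [norm_mul, Real.norm_eq_abs]
        exact mul_le_mul_of_nonneg_right (ψ.norm_coe_le_norm _) (abs_nonneg _)
    _ = ‖ψ‖ * ∫ x, |g x| ∂μ := integral_const_mul _ _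

end BoundedIntegrands

section OnePoint

theorem ContinuousMap.uniformContinuous_comp_coe {G Y : Type*} [UniformSpace G] [UniformSpace Y]
    (φ : C(OnePoint G, Y)) : UniformContinuous fun a : G => φ a :=
  (φ.continuous.comp OnePoint.continuous_coe).uniformContinuous_of_tendsto_cocompact
    ((φ.continuous.tendsto _).comp
      (OnePoint.tendsto_coe_infty.mono_left cocompact_le_coclosedCompact))

variable {G : Type*} [TopologicalSpace G] [Add G] [ContinuousAdd G]

noncomputable def ContinuousMap.restrictAddRight (φ : C(OnePoint G, ℝ)) (c : G) : G →ᵇ ℝ :=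
  (mkOfCompact φ).compContinuous
    ⟨fun a => ((a + c : G) : OnePoint G), OnePoint.continuous_coe.comp (continuous_add_const c)⟩

theorem ContinuousMap.continuous_integral_comp_add [MeasurableSpace G] [OpensMeasurableSpace G]
    [FirstCountableTopology G] (φ : C(OnePoint G, ℝ)) (P : Measure G) [IsFiniteMeasure P] :
    Continuous fun c : G => ∫ a, φ ↑(a + c) ∂P :=
  continuous_of_dominated (bound := fun _ => ‖mkOfCompact φ‖)
    (fun c => (φ.restrictAddRight c).continuous.aestronglyMeasurable)
    (fun _ => ae_of_all _ fun _ => (mkOfCompact φ).norm_coe_le_norm _) (integrable_const _)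
    (ae_of_all _ fun a => φ.continuous.comp (OnePoint.continuous_coe.comp (continuous_const_add a)))

theorem ContinuousMap.norm_integral_comp_add_le [MeasurableSpace G] [OpensMeasurableSpace G]
    (φ : C(OnePoint G, ℝ)) (P : Measure G) [IsProbabilityMeasure P] (c : G) :
    ‖∫ a, φ ↑(a + c) ∂P‖ ≤ ‖mkOfCompact φ‖ :=
  ((φ.restrictAddRight c).norm_integral_le_norm (μ := P)).trans (norm_compContinuous_le _ _)

theorem ContinuousMap.uniformContinuous_restrictAddRight {G : Type*} [Add G] [PseudoMetricSpace G]
    [ContinuousAdd G] (hdist : ∀ a b c : G, dist (a + c) (b + c) = dist a b)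
    (φ : C(OnePoint G, ℝ)) (c : G) : UniformContinuous (φ.restrictAddRight c) :=
  φ.uniformContinuous_comp_coe.comp (Isometry.of_dist_eq fun a b => hdist a b c).uniformContinuous

end OnePoint

section AsymptoticIndependence

variable {X G : Type*} [MeasurableSpace X] {μ : Measure X} {T : X → X}
  [AddGroup G] [PseudoMetricSpace G] [MeasurableSpace G] [OpensMeasurableSpace G]
  (hdist : ∀ a b c : G, dist (a + c) (b + c) = dist a b) {F : ℕ → X → G}
  (hF : ∀ n, Measurable (F n))
  (hFT : TendstoInMeasure μ (fun n x => F n (T x) - F n x) atTop 0)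
  {ψ : G →ᵇ ℝ} (hψ : UniformContinuous ψ)
include hdist hF hFT hψ

theorem tendsto_integral_comp_mul_coboundary (hT : MeasurePreserving T μ μ) {k : X → ℝ}
    (hk : Integrable k μ) :
    Tendsto (fun n => ∫ x, ψ (F n x) * (k (T x) - k x) ∂μ) atTop (𝓝 0) := by
  have hkT : Integrable (fun x => k (T x)) μ := hT.integrable_comp_of_integrable hk
  have hψF : ∀ n, Measurable fun x => ψ (F n x) := fun n => ψ.continuous.measurable.comp (hF n)
  have hdiff : Tendsto (fun n => ∫ x, (ψ (F n (T x)) - ψ (F n x)) * k (T x) ∂μ) atTop (𝓝 0) :=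
    ((hFT.dist_of_sub hdist).sub_comp_of_uniformContinuous hψ).tendsto_integral_mul
      (fun n => (((hψF n).comp hT.measurable).sub (hψF n)).aestronglyMeasurable)
      (fun n x => by simpa [Real.dist_eq] using ψ.dist_le_two_norm _ _) hkT
  have hneg := hdiff.neg
  rw [neg_zero] at hneg
  refine hneg.congr fun n => ?_
  have hshift : ∫ x, ψ (F n (T x)) * k (T x) ∂μ = ∫ x, ψ (F n x) * k x ∂μ :=
    hT.integral_comp_of_aestronglyMeasurable (g := fun y => ψ (F n y) * k y)
      (ψ.integrable_comp_mul (hF n) hk).1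
  calc -∫ x, (ψ (F n (T x)) - ψ (F n x)) * k (T x) ∂μ
      = ∫ x, ψ (F n x) * k (T x) ∂μ - ∫ x, ψ (F n (T x)) * k (T x) ∂μ := by
        rw [← integral_sub (ψ.integrable_comp_mul (hF n) hkT)
          (ψ.integrable_comp_mul (f := fun x => F n (T x)) ((hF n).comp hT.measurable) hkT),
          ← integral_neg]
        simp only [neg_sub, sub_mul]
    _ = ∫ x, ψ (F n x) * (k (T x) - k x) ∂μ := by
        rw [hshift, ← integral_sub (ψ.integrable_comp_mul (hF n) hkT)
          (ψ.integrable_comp_mul (hF n) hk)]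
        simp only [mul_sub]

theorem tendsto_integral_comp_mul_of_ergodic [IsProbabilityMeasure μ] (hT : Ergodic T μ) {L : ℝ}
    (hL : Tendsto (fun n => ∫ x, ψ (F n x) ∂μ) atTop (𝓝 L)) {g : X → ℝ} (hg : Integrable g μ) :
    Tendsto (fun n => ∫ x, ψ (F n x) * g x ∂μ) atTop (𝓝 (L * ∫ x, g x ∂μ)) := by
  refine tendsto_of_forall_exists_approx fun ε hε => ?_
  obtain ⟨m, hmε, hm⟩ := ((((hT.tendsto_integral_abs_birkhoffAverage_sub hg).const_mul
    ‖ψ‖).eventually (ge_mem_nhds (by simpa using hε))).and (eventually_ne_atTop 0)).exists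
  obtain ⟨k, hk, hkA⟩ :=
    hT.toMeasurePreserving.exists_integrable_coboundary_eq_birkhoffAverage_sub hg hm
  have hcob := tendsto_integral_comp_mul_coboundary hdist hF hFT hψ hT.toMeasurePreserving hk
  -- the approximant integrates `ψ (Fₙ x)` against `g - (A_m g - ∫ g) = ∫ g - (k ∘ T - k)`
  refine ⟨fun n => (∫ x, ψ (F n x) ∂μ) * ∫ x, g x ∂μ - ∫ x, ψ (F n x) * (k (T x) - k x) ∂μ,
    L * ∫ x, g x ∂μ, by simpa using (hL.mul_const _).sub hcob, by simp [hε.le], fun n => ?_⟩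
  have hψF : Integrable (fun x => ψ (F n x)) μ := by
    simpa using ψ.integrable_comp_mul (hF n) (integrable_const (1 : ℝ))
  have hψA := ψ.integrable_comp_mul (hF n) (hT.toMeasurePreserving.integrable_birkhoffAverage hg m)
  have hψg := ψ.integrable_comp_mul (hF n) hg
  have hcoboundary : ∫ x, ψ (F n x) * (k (T x) - k x) ∂μ
      = ∫ x, ψ (F n x) * birkhoffAverage ℝ T g m x ∂μ - ∫ x, ψ (F n x) * g x ∂μ := by
    simp only [hkA, mul_sub]
    exact integral_sub hψA hψg
  have hcentered : ∫ x, ψ (F n x) * (birkhoffAverage ℝ T g m x - ∫ y, g y ∂μ) ∂μ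
      = ∫ x, ψ (F n x) * birkhoffAverage ℝ T g m x ∂μ - (∫ x, ψ (F n x) ∂μ) * ∫ y, g y ∂μ := by
    simp only [mul_sub]
    rw [integral_sub hψA (hψF.mul_const _), integral_mul_const]
  calc _ = |∫ x, ψ (F n x) * (birkhoffAverage ℝ T g m x - ∫ y, g y ∂μ) ∂μ| := by
        beta_reduce
        rw [hcoboundary, hcentered]
        ring_nf
    _ ≤ ε := (ψ.abs_integral_comp_mul_le
        ((hT.toMeasurePreserving.integrable_birkhoffAverage hg m).sub
          (integrable_const _))).trans hmε

end AsymptoticIndependence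

section TranslatedIntegrands

variable {X G : Type*} [MeasurableSpace X] {μ : Measure X} {T : X → X}
  [AddCommGroup G] [PseudoMetricSpace G] [ContinuousAdd G] [MeasurableSpace G] [BorelSpace G]
  (hdist : ∀ a b c : G, dist (a + c) (b + c) = dist a b) {F : ℕ → X → G}
  (hF : ∀ n, Measurable (F n))

include hdist hF in
theorem tendsto_integral_add_simpleFunc_mul [IsProbabilityMeasure μ] (hT : Ergodic T μ)
    (hFT : TendstoInMeasure μ (fun n x => F n (T x) - F n x) atTop 0)
    {P : Measure G} (hweak : ∀ ψ : G →ᵇ ℝ,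
      Tendsto (fun n => ∫ x, ψ (F n x) ∂μ) atTop (𝓝 (∫ a, ψ a ∂P)))
    (φ : C(OnePoint G, ℝ)) {j : X → ℝ} (hj : Integrable j μ) (s : SimpleFunc X G) :
    Tendsto (fun n => ∫ x, φ ↑(F n x + s x) * j x ∂μ) atTop
      (𝓝 (∫ x, (∫ a, φ ↑(a + s x) ∂P) * j x ∂μ)) := by
  have hjs : ∀ c, Integrable ((s ⁻¹' {c}).indicator j) μ :=
    fun c => hj.indicator (s.measurableSet_fiber c)
  rw [s.integral_comp_mul_eq_sum (fun c _ => ∫ a, φ ↑(a + c) ∂P) fun c => (hjs c).const_mul _]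
  simp only [integral_const_mul]
  refine (tendsto_finsetSum _ fun c _ => tendsto_integral_comp_mul_of_ergodic hdist hF hFT
    (φ.uniformContinuous_restrictAddRight hdist c) hT (hweak _) (hjs c)).congr fun n => ?_
  exact (s.integral_comp_mul_eq_sum (fun c x => φ.restrictAddRight c (F n x))
    fun c => (φ.restrictAddRight c).integrable_comp_mul (hF n) (hjs c)).symm

-- Convergence along `atTop ×ˢ ⊤` is convergence in `k`, uniformly in `n`.
include hdist hF in
theorem tendsto_integral_add_mul_sub_of_tendsto [IsFiniteMeasure μ] [SecondCountableTopology G]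
    (φ : C(OnePoint G, ℝ)) {h : X → G} (hh : Measurable h) {s : ℕ → X → G}
    (hs : ∀ k, Measurable (s k)) (hsh : ∀ x, Tendsto (s · x) atTop (𝓝 (h x)))
    {j : X → ℝ} (hj : Integrable j μ) :
    Tendsto (fun q : ℕ × ℕ =>
        ∫ x, φ ↑(F q.2 x + h x) * j x ∂μ - ∫ x, φ ↑(F q.2 x + s q.1 x) * j x ∂μ)
      (atTop ×ˢ ⊤) (𝓝 0) := by
  have hφm : ∀ {u : X → G}, Measurable u → Measurable fun x => φ ↑(u x) :=
    fun hu => (φ.continuous.comp OnePoint.continuous_coe).measurable.comp hu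
  have hint : ∀ {u : X → G}, Measurable u → Integrable (fun x => φ ↑(u x) * j x) μ :=
    fun hu => hj.bdd_mul (hφm hu).aestronglyMeasurable
      (ae_of_all _ fun x => (mkOfCompact φ).norm_coe_le_norm _)
  have hdiff : TendstoInMeasure μ
      (fun q : ℕ × ℕ => fun x => φ ↑(F q.2 x + h x) - φ ↑(F q.2 x + s q.1 x)) (atTop ×ˢ ⊤) 0 := by
    have huc : UniformContinuous (fun a : G => φ a) := φ.uniformContinuous_comp_coe
    refine TendstoInMeasure.sub_comp_of_uniformContinuous huc
      (u := fun (q : ℕ × ℕ) x => F q.2 x + h x) (v := fun q x => F q.2 x + s q.1 x) ?_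
    have hdist_eq : (fun (q : ℕ × ℕ) x => dist (F q.2 x + h x) (F q.2 x + s q.1 x))
        = fun q x => dist (h x) (s q.1 x) := by
      funext q x
      rw [add_comm (F q.2 x), add_comm (F q.2 x), hdist]
    rw [hdist_eq]
    refine TendstoInMeasure.comp (f := fun k x => dist (h x) (s k x)) ?_ tendsto_fst
    exact tendstoInMeasure_of_tendsto_ae (fun k => (hh.dist (hs k)).aestronglyMeasurable)
      (ae_of_all _ fun x => by simpa using (tendsto_const_nhds (x := h x)).dist (hsh x))
  refine (hdiff.tendsto_integral_mul (fun q => ((hφm ((hF q.2).add hh)).sub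
    (hφm ((hF q.2).add (hs q.1)))).aestronglyMeasurable)
    (fun q x => by simpa [Real.dist_eq] using (mkOfCompact φ).dist_le_two_norm _ _) hj).congr
    fun q => ?_
  rw [← integral_sub (hint (u := fun x => F q.2 x + h x) ((hF q.2).add hh))
    (hint (u := fun x => F q.2 x + s q.1 x) ((hF q.2).add (hs q.1)))]
  simp only [sub_mul]

theorem ContinuousMap.tendsto_integral_integral_add_mul (φ : C(OnePoint G, ℝ)) (P : Measure G)
    [IsProbabilityMeasure P] {h : X → G} {s : ℕ → X → G} (hs : ∀ k, Measurable (s k))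
    (hsh : ∀ x, Tendsto (s · x) atTop (𝓝 (h x))) {j : X → ℝ} (hj : Integrable j μ) :
    Tendsto (fun k => ∫ x, (∫ a, φ ↑(a + s k x) ∂P) * j x ∂μ) atTop
      (𝓝 (∫ x, (∫ a, φ ↑(a + h x) ∂P) * j x ∂μ)) := by
  have hw := φ.continuous_integral_comp_add P
  refine tendsto_integral_of_dominated_convergence (fun x => ‖mkOfCompact φ‖ * ‖j x‖)
    (fun k => (hw.measurable.comp (hs k)).aestronglyMeasurable.mul hj.1) (hj.norm.const_mul _)
    (fun k => ae_of_all _ fun x => ?_)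
    (ae_of_all _ fun x => ((hw.tendsto _).comp (hsh x)).mul_const (j x))
  rw [norm_mul]
  exact mul_le_mul_of_nonneg_right (φ.norm_integral_comp_add_le P _) (norm_nonneg _)

end TranslatedIntegrands

theorem stmt6_general {X : Type*} [MeasurableSpace X] (μ : Measure X) [IsProbabilityMeasure μ]
    {G : Type*} [MeasurableSpace G] [AddCommGroup G] [MetricSpace G]
    [IsTopologicalAddGroup G] [BorelSpace G] [PolishSpace G]
    (hdist : ∀ a b c : G, dist (a + c) (b + c) = dist a b)
    (T : X → X) (hTerg : Ergodic T μ)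
    (F : ℕ → X → G) (hFmeas : ∀ n, Measurable (F n))
    (P : Measure G) [IsProbabilityMeasure P]
    (hweak : ∀ ψ : G →ᵇ ℝ,
      Tendsto (fun n => ∫ x, ψ (F n x) ∂μ) atTop (nhds (∫ g, ψ g ∂P)))
    (hinmeasure : TendstoInMeasure μ (fun n x => F n (T x) - F n x) atTop 0)
    (φ : C(OnePoint G, ℝ))
    (h : X → G) (hh : Measurable h)
    (j : X → ℝ) (hj : Integrable j μ) :
    Tendsto (fun n => ∫ x, φ (OnePoint.some (F n x + h x)) * j x ∂μ) atTop
      (nhds (∫ x, (∫ g, φ (OnePoint.some (g + h x)) * j x ∂P) ∂μ)) := by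
  simp_rw [integral_mul_const]
  set s : ℕ → SimpleFunc X G := fun k => SimpleFunc.approxOn h hh Set.univ 0 (Set.mem_univ 0) k
  have hs : ∀ x, Tendsto (s · x) atTop (𝓝 (h x)) :=
    fun x => SimpleFunc.tendsto_approxOn hh (Set.mem_univ 0) (by simp)
  have hunif := tendsto_integral_add_mul_sub_of_tendsto hdist hFmeas φ hh
    (fun k => (s k).measurable) hs hj
  have hlim := φ.tendsto_integral_integral_add_mul P (fun k => (s k).measurable) hs hj
  refine tendsto_of_forall_exists_approx fun ε hε => ?_
  obtain ⟨k, hk, hkε⟩ := ((hunif.eventually (Metric.closedBall_mem_nhds 0 hε)).curry.and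
    (hlim.eventually (Metric.closedBall_mem_nhds _ hε))).exists
  refine ⟨_, _, tendsto_integral_add_simpleFunc_mul hdist hFmeas hTerg hinmeasure hweak φ hj (s k),
    by simpa [Real.dist_eq] using hkε, fun n => ?_⟩
  simpa [Real.dist_eq] using hk n

/-- Generalization of Lemma 4.1 of Frączek–Lemańczyk: if `T` is ergodic,
`(Fₙ)_* μ → P` weakly and `Fₙ ∘ T - Fₙ → 0` in measure, then for every continuous `φ`
on the one-point compactification of `G`, every measurable `h : X → G` and `j ∈ L¹(μ)`,
`∫ φ(Fₙ(x) + h(x)) j(x) dμ → ∫∫ φ(g + h(x)) j(x) dP(g) dμ(x)`. -/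
theorem stmt6 {X : Type*} [MeasurableSpace X] (μ : Measure X) [IsProbabilityMeasure μ]
    {G : Type*} [MeasurableSpace G] [AddCommGroup G] [MetricSpace G]
    [IsTopologicalAddGroup G] [BorelSpace G] [PolishSpace G] [LocallyCompactSpace G]
    (hdist : ∀ a b c : G, dist (a + c) (b + c) = dist a b)
    (T : X → X) (hTerg : Ergodic T μ)
    (F : ℕ → X → G) (hFmeas : ∀ n, Measurable (F n))
    (P : Measure G) [IsProbabilityMeasure P]
    (hweak : ∀ ψ : G →ᵇ ℝ,
      Tendsto (fun n => ∫ x, ψ (F n x) ∂μ) atTop (nhds (∫ g, ψ g ∂P)))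
    (hinmeasure : TendstoInMeasure μ (fun n x => F n (T x) - F n x) atTop 0)
    (φ : C(OnePoint G, ℝ))
    (h : X → G) (hh : Measurable h)
    (j : X → ℝ) (hj : Integrable j μ) :
    Tendsto (fun n => ∫ x, φ (OnePoint.some (F n x + h x)) * j x ∂μ) atTop
      (nhds (∫ x, (∫ g, φ (OnePoint.some (g + h x)) * j x ∂P) ∂μ)) :=
  stmt6_general μ hdist T hTerg F hFmeas P hweak hinmeasure φ h hh j hj
end

section
/- The set of irrational α ∈ [0,1) with the following property has full Lebesgue measure: for every ε > 0 there exists δ with 0 < δ < ε and a subsequence (n_k) of indices such that q_{n_k} ‖q_{n_k} α‖ → δ, where q_n are the denominators of the continued fraction convergents of α. -/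
/-!
For almost every `α`, every positive integer `m` occurs infinitely often among the partial
quotients `aₙ`. Otherwise the numbers whose partial quotients avoid `m` from rank `N` on form a
set of positive measure, which has a Lebesgue density point `x`. But the cylinder of rank `n ≥ N`
around `x` has length `≍ qₙ⁻²` and, by bounded distortion of the inverse branch of the Gauss
map, a fixed proportion of it consists of numbers with `aₙ₊₁ = m`; so the density at `x` stays
bounded away from `1`.

When `aₙ₊₁ = m`, the error formula `|qₙ α - pₙ| = 1 / (qₙ αₙ₊₁ + qₙ₋₁)` with `αₙ₊₁ ∈ (m, m + 1)`
gives `1 / (m + 2) ≤ qₙ ‖qₙ α‖ ≤ 1 / m`. Taking `m > 1 / ε`, a convergent subsequence of these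
values has its limit `δ` in `[1 / (m + 2), 1 / m] ⊆ (0, ε)`.
-/

open MeasureTheory Filter Set Metric Topology GenContFract
open scoped ENNReal

theorem measure_eq_zero_of_frequently_gap {β : Type*} [MetricSpace β] [ProperSpace β]
    [MeasurableSpace β] [BorelSpace β] [SecondCountableTopology β] [HasBesicovitchCovering β]
    (μ : Measure β) [IsFiniteMeasureOnCompacts μ] {F : Set β} {c : ℝ≥0∞} (hc : 0 < c)
    (hF : ∀ x ∈ F, ∃ᶠ r in 𝓝[>] (0 : ℝ), ∃ S ⊆ closedBall x r,
      MeasurableSet S ∧ Disjoint S F ∧ c * μ (closedBall x r) ≤ μ S) :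
    μ F = 0 := by
  set T := toMeasurable μ F
  have hdensity := Besicovitch.ae_tendsto_measure_inter_div_of_measurableSet μ
    (measurableSet_toMeasurable μ F)
  by_contra hμF
  obtain ⟨x, hxF, hx⟩ : ∃ x ∈ F, Tendsto (fun r => μ (T ∩ closedBall x r) / μ (closedBall x r))
      (𝓝[>] 0) (𝓝 1) := by
    by_contra! h
    refine hμF (measure_mono_null (fun x hxF => ?_) (ae_iff.1 hdensity))
    simpa [Set.indicator_of_mem (subset_toMeasurable μ F hxF)] using h x hxF
  have hgap : ∃ᶠ r in 𝓝[>] (0 : ℝ), μ (T ∩ closedBall x r) / μ (closedBall x r) ≤ 1 - c := by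
    refine (hF x hxF).mono fun r ⟨S, hSB, hS, hSF, hcS⟩ => ENNReal.div_le_of_le_mul ?_
    have hB : μ (closedBall x r) ≠ ⊤ := measure_closedBall_lt_top.ne
    have hsum : μ (F ∩ closedBall x r) + μ S ≤ μ (closedBall x r) := by
      rw [← measure_union (hSF.symm.mono_left inter_subset_left) hS]
      exact measure_mono (union_subset inter_subset_right hSB)
    rw [Measure.measure_toMeasurable_inter_of_sFinite measurableSet_closedBall,
      ENNReal.sub_mul fun _ _ => hB, one_mul]
    exact ENNReal.le_sub_of_add_le_right (ne_top_of_le_ne_top hB (hcS.trans (measure_mono hSB)))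
      (le_trans (by gcongr) hsum)
  have hclose : ∀ᶠ r in 𝓝[>] (0 : ℝ), 1 - c < μ (T ∩ closedBall x r) / μ (closedBall x r) :=
    hx.eventually (lt_mem_nhds (ENNReal.sub_lt_self ENNReal.one_ne_top one_ne_zero hc.ne'))
  obtain ⟨r, hle, hlt⟩ := (hgap.and_eventually hclose).exists
  exact hlt.not_ge hle

def gaussMap {K : Type*} [DivisionRing K] [LinearOrder K] [FloorRing K] (x : K) : K :=
  Int.fract x⁻¹

theorem irrational_iterate_gaussMap {x : ℝ} (hx : Irrational x) (k : ℕ) :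
    Irrational (gaussMap^[k] x) := by
  induction k with
  | zero => exact hx
  | succ k ih => rw [Function.iterate_succ_apply']; exact ih.inv.sub_intCast _

theorem iterate_gaussMap_mem_Ioo {x : ℝ} (hx : Irrational x) (h01 : x ∈ Ioo 0 1) (k : ℕ) :
    gaussMap^[k] x ∈ Ioo 0 1 := by
  cases k with
  | zero => exact h01
  | succ k =>
    have hne := (irrational_iterate_gaussMap hx (k + 1)).ne_zero
    rw [Function.iterate_succ_apply'] at hne ⊢
    exact ⟨(Int.fract_nonneg _).lt_of_ne' hne, Int.fract_lt_one _⟩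

/-- The partial quotient `a_{k+1}` of `x ∈ (0, 1)`. -/
noncomputable def gaussDigit (x : ℝ) (k : ℕ) : ℤ := ⌊(gaussMap^[k] x)⁻¹⌋

noncomputable def gaussDigits (x : ℝ) (n : ℕ) : List ℤ := (List.range n).map (gaussDigit x)

@[simp]
theorem length_gaussDigits (x : ℝ) (n : ℕ) : (gaussDigits x n).length = n := by
  simp [gaussDigits]

theorem gaussDigits_pos {x : ℝ} (hx : Irrational x) (h01 : x ∈ Ioo 0 1) {n : ℕ} :
    ∀ a ∈ gaussDigits x n, 0 < a := by
  simp only [gaussDigits, List.mem_map, List.mem_range, forall_exists_index, and_imp]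
  rintro _ k - rfl
  have hk := iterate_gaussMap_mem_Ioo hx h01 k
  exact Int.floor_pos.2 (one_le_inv₀ hk.1 |>.2 hk.2.le)

/-- `ofDigits [a₁, …, aₙ] s = 1 / (a₁ + 1 / (a₂ + ⋯ + 1 / (aₙ + s)))`, the inverse branch of
`gaussMap^[n]` on the cylinder of the digits `a₁, …, aₙ`. -/
noncomputable def ofDigits : List ℤ → ℝ → ℝ
  | [], s => s
  | a :: w, s => (a + ofDigits w s)⁻¹

theorem ofDigits_append (w₁ w₂ : List ℤ) (s : ℝ) :
    ofDigits (w₁ ++ w₂) s = ofDigits w₁ (ofDigits w₂ s) := by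
  induction w₁ with
  | nil => rfl
  | cons a w ih => simp only [List.cons_append, ofDigits, ih]

theorem ofDigits_gaussDigits (x : ℝ) (n : ℕ) :
    ofDigits (gaussDigits x n) (gaussMap^[n] x) = x := by
  induction n with
  | zero => rfl
  | succ n ih =>
    have hlast : ofDigits [gaussDigit x n] (gaussMap^[n + 1] x) = gaussMap^[n] x := by
      rw [Function.iterate_succ_apply', ofDigits, ofDigits, gaussDigit, gaussMap,
        Int.floor_add_fract, inv_inv]
    rw [gaussDigits, List.range_succ, List.map_append, ← gaussDigits, List.map_singleton,
      ofDigits_append, hlast, ih]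

theorem ofDigits_mem_Ioo {w : List ℤ} (hw : ∀ a ∈ w, 0 < a) {s : ℝ} (hs : s ∈ Ioo 0 1) :
    ofDigits w s ∈ Ioo 0 1 := by
  induction w with
  | nil => exact hs
  | cons a w ih =>
    have ha : (1 : ℝ) ≤ a := by exact_mod_cast hw a List.mem_cons_self
    have := ih fun b hb => hw b (List.mem_cons_of_mem a hb)
    exact ⟨inv_pos.2 (by linarith [this.1]), inv_lt_one_of_one_lt₀ (by linarith [this.1])⟩

theorem iterate_gaussMap_ofDigits {w : List ℤ} (hw : ∀ a ∈ w, 0 < a) {s : ℝ}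
    (hs : s ∈ Ioo 0 1) : gaussMap^[w.length] (ofDigits w s) = s := by
  induction w with
  | nil => rfl
  | cons a w ih =>
    have hw' : ∀ b ∈ w, 0 < b := fun b hb => hw b (List.mem_cons_of_mem a hb)
    have h01 := ofDigits_mem_Ioo hw' hs
    rw [List.length_cons, Function.iterate_succ_apply, ofDigits, gaussMap, inv_inv,
      Int.fract_intCast_add, Int.fract_eq_self.2 ⟨h01.1.le, h01.2⟩, ih hw']

/-- With `continuants w = ((p, p'), (q, q'))`, `ofDigits w s = (p + p' s) / (q + q' s)`. -/
def continuants : List ℤ → (ℤ × ℤ) × (ℤ × ℤ)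
  | [] => ((0, 1), (1, 0))
  | a :: w => ((continuants w).2, a • (continuants w).2 + (continuants w).1)

noncomputable def ofDigitsNum (w : List ℤ) (s : ℝ) : ℝ :=
  (continuants w).1.1 + (continuants w).1.2 * s

noncomputable def ofDigitsDen (w : List ℤ) (s : ℝ) : ℝ :=
  (continuants w).2.1 + (continuants w).2.2 * s

theorem ofDigitsNum_cons (a : ℤ) (w : List ℤ) (s : ℝ) :
    ofDigitsNum (a :: w) s = ofDigitsDen w s := rfl

theorem ofDigitsDen_cons (a : ℤ) (w : List ℤ) (s : ℝ) :
    ofDigitsDen (a :: w) s = a * ofDigitsDen w s + ofDigitsNum w s := by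
  simp only [ofDigitsDen, ofDigitsNum, continuants, Prod.fst_add, Prod.snd_add, Prod.smul_fst,
    Prod.smul_snd, smul_eq_mul]
  push_cast
  ring

theorem ofDigitsNum_mul_ofDigitsDen_sub (w : List ℤ) (s t : ℝ) :
    ofDigitsNum w t * ofDigitsDen w s - ofDigitsNum w s * ofDigitsDen w t =
      (-1) ^ w.length * (t - s) := by
  induction w with
  | nil => simp [ofDigitsNum, ofDigitsDen, continuants]
  | cons a w ih =>
    rw [ofDigitsNum_cons, ofDigitsNum_cons, ofDigitsDen_cons, ofDigitsDen_cons, List.length_cons,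
      pow_succ]
    linear_combination -ih

theorem continuants_bounds {w : List ℤ} (hw : ∀ a ∈ w, 0 < a) :
    0 ≤ (continuants w).1.1 ∧ 0 ≤ (continuants w).1.2 ∧ 0 ≤ (continuants w).2.2 ∧
      (continuants w).2.2 ≤ (continuants w).2.1 ∧
      (continuants w).1.2 + (continuants w).2.2 ≤ (continuants w).1.1 + (continuants w).2.1 ∧
      1 ≤ (continuants w).1.1 + (continuants w).1.2 ∧
      w.length + 1 ≤ (continuants w).2.1 + (continuants w).2.2 := by
  induction w with
  | nil => simp [continuants]
  | cons a w ih =>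
    have ha : 1 ≤ a := hw a List.mem_cons_self
    obtain ⟨h₁, h₂, h₃, h₄, h₅, h₆, h₇⟩ := ih fun b hb => hw b (List.mem_cons_of_mem a hb)
    simp only [continuants, Prod.fst_add, Prod.snd_add, Prod.smul_fst, Prod.smul_snd,
      smul_eq_mul, List.length_cons]
    push_cast
    refine ⟨by omega, by omega, by nlinarith, by nlinarith, by nlinarith, by omega, by nlinarith⟩

section PositiveDigits

variable {w : List ℤ}

theorem continuants_le_ofDigitsDen (hw : ∀ a ∈ w, 0 < a) {s : ℝ} (hs : 0 ≤ s) :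
    ((continuants w).2.1 : ℝ) ≤ ofDigitsDen w s := by
  have : (0 : ℝ) ≤ (continuants w).2.2 := by exact_mod_cast (continuants_bounds hw).2.2.1
  unfold ofDigitsDen
  nlinarith

theorem ofDigitsDen_le (hw : ∀ a ∈ w, 0 < a) {s : ℝ} (hs : s ≤ 1) :
    ofDigitsDen w s ≤ 2 * (continuants w).2.1 := by
  obtain ⟨-, -, h₀, h₁, -⟩ := continuants_bounds hw
  have h₀' : (0 : ℝ) ≤ (continuants w).2.2 := by exact_mod_cast h₀
  have h₁' : ((continuants w).2.2 : ℝ) ≤ (continuants w).2.1 := by exact_mod_cast h₁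
  unfold ofDigitsDen
  nlinarith

theorem length_add_one_le_two_mul_continuants (hw : ∀ a ∈ w, 0 < a) :
    (w.length + 1 : ℝ) ≤ 2 * (continuants w).2.1 := by
  obtain ⟨-, -, -, h₁, -, -, h₂⟩ := continuants_bounds hw
  have : (w.length : ℤ) + 1 ≤ 2 * (continuants w).2.1 := by omega
  exact_mod_cast this

theorem continuants_pos (hw : ∀ a ∈ w, 0 < a) : (0 : ℝ) < (continuants w).2.1 := by
  linarith [length_add_one_le_two_mul_continuants hw]

theorem ofDigitsDen_pos (hw : ∀ a ∈ w, 0 < a) {s : ℝ} (hs : 0 ≤ s) : 0 < ofDigitsDen w s :=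
  (continuants_pos hw).trans_le (continuants_le_ofDigitsDen hw hs)

theorem ofDigits_eq_div (hw : ∀ a ∈ w, 0 < a) {s : ℝ} (hs : 0 ≤ s) :
    ofDigits w s = ofDigitsNum w s / ofDigitsDen w s := by
  induction w with
  | nil => simp [ofDigits, ofDigitsNum, ofDigitsDen, continuants]
  | cons a w ih =>
    have hw' : ∀ b ∈ w, 0 < b := fun b hb => hw b (List.mem_cons_of_mem a hb)
    have hD := ofDigitsDen_pos hw' hs
    have hD' := ofDigitsDen_pos hw hs
    rw [ofDigitsDen_cons] at hD'
    rw [ofDigits, ih hw', ofDigitsNum_cons, ofDigitsDen_cons]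
    field_simp

theorem abs_ofDigits_sub (hw : ∀ a ∈ w, 0 < a) {s t : ℝ} (hs : 0 ≤ s) (ht : 0 ≤ t) :
    |ofDigits w t - ofDigits w s| = |t - s| / (ofDigitsDen w s * ofDigitsDen w t) := by
  have hDs := ofDigitsDen_pos hw hs
  have hDt := ofDigitsDen_pos hw ht
  rw [ofDigits_eq_div hw ht, ofDigits_eq_div hw hs, div_sub_div _ _ hDt.ne' hDs.ne',
    mul_comm (ofDigitsDen w t) (ofDigitsNum w s), ofDigitsNum_mul_ofDigitsDen_sub, abs_div,
    abs_mul, abs_pow, abs_neg, abs_one, one_pow, one_mul, abs_of_pos (mul_pos hDt hDs), mul_comm]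

theorem abs_ofDigits_sub_le (hw : ∀ a ∈ w, 0 < a) {s t : ℝ} (hs : s ∈ Icc 0 1)
    (ht : t ∈ Icc 0 1) : |ofDigits w t - ofDigits w s| ≤ (((continuants w).2.1 : ℝ) ^ 2)⁻¹ := by
  have hq := continuants_pos hw
  have hts : |t - s| ≤ 1 := abs_sub_le_iff.2 ⟨by linarith [ht.2, hs.1], by linarith [hs.2, ht.1]⟩
  rw [abs_ofDigits_sub hw hs.1 ht.1, inv_eq_one_div, sq]
  exact div_le_div₀ zero_le_one hts (by positivity) (mul_le_mul
    (continuants_le_ofDigitsDen hw hs.1) (continuants_le_ofDigitsDen hw ht.1) hq.le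
    (ofDigitsDen_pos hw hs.1).le)

theorem le_abs_ofDigits_sub (hw : ∀ a ∈ w, 0 < a) {s t : ℝ} (hs : s ∈ Icc 0 1)
    (ht : t ∈ Icc 0 1) :
    |t - s| / (4 * ((continuants w).2.1 : ℝ) ^ 2) ≤ |ofDigits w t - ofDigits w s| := by
  rw [abs_ofDigits_sub hw hs.1 ht.1]
  refine div_le_div_of_nonneg_left (abs_nonneg _)
    (mul_pos (ofDigitsDen_pos hw hs.1) (ofDigitsDen_pos hw ht.1)) ?_
  calc ofDigitsDen w s * ofDigitsDen w t
      ≤ (2 * (continuants w).2.1) * (2 * (continuants w).2.1) :=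
        mul_le_mul (ofDigitsDen_le hw hs.2) (ofDigitsDen_le hw ht.2)
          (ofDigitsDen_pos hw ht.1).le (by linarith [continuants_pos hw])
    _ = 4 * ((continuants w).2.1 : ℝ) ^ 2 := by ring

theorem continuousOn_ofDigits (hw : ∀ a ∈ w, 0 < a) : ContinuousOn (ofDigits w) (Ici 0) := by
  refine ContinuousOn.congr ?_ fun s hs => ofDigits_eq_div hw hs
  refine ContinuousOn.div (by unfold ofDigitsNum; fun_prop) (by unfold ofDigitsDen; fun_prop)
    fun s hs => (ofDigitsDen_pos hw hs).ne'

end PositiveDigits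

theorem exists_interval_subset_ofDigits_image {w : List ℤ} (hw : ∀ a ∈ w, 0 < a) {t u₁ u₂ : ℝ}
    (ht : t ∈ Icc 0 1) (hu₁ : 0 ≤ u₁) (hu : u₁ ≤ u₂) (hu₂ : u₂ ≤ 1) :
    ∃ S ⊆ closedBall (ofDigits w t) (((continuants w).2.1 : ℝ) ^ 2)⁻¹,
      MeasurableSet S ∧ S ⊆ ofDigits w '' Icc u₁ u₂ ∧
      ENNReal.ofReal ((u₂ - u₁) / 8) *
          volume (closedBall (ofDigits w t) (((continuants w).2.1 : ℝ) ^ 2)⁻¹) ≤ volume S := by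
  have hIcc : Icc u₁ u₂ ⊆ Icc 0 1 := Icc_subset_Icc hu₁ hu₂
  have himage : uIcc (ofDigits w u₁) (ofDigits w u₂) ⊆ ofDigits w '' Icc u₁ u₂ := by
    rw [← uIcc_of_le hu]
    exact intermediate_value_uIcc ((continuousOn_ofDigits hw).mono
      (by rw [uIcc_of_le hu]; exact fun s hs => (hIcc hs).1))
  refine ⟨uIcc (ofDigits w u₁) (ofDigits w u₂), ?_, measurableSet_uIcc, himage, ?_⟩
  · rintro _ hy
    obtain ⟨s, hs, rfl⟩ := himage hy
    rw [mem_closedBall, Real.dist_eq]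
    exact abs_ofDigits_sub_le hw ht (hIcc hs)
  · have hq := continuants_pos hw
    have hlen := le_abs_ofDigits_sub hw (hIcc ⟨le_rfl, hu⟩) (hIcc ⟨hu, le_rfl⟩)
    rw [Real.volume_closedBall, Real.volume_interval, ← ENNReal.ofReal_mul (by linarith)]
    refine ENNReal.ofReal_le_ofReal (le_of_eq_of_le ?_ hlen)
    rw [abs_of_nonneg (sub_nonneg.2 hu)]
    field_simp
    ring

theorem floor_inv_eq_of_mem_Icc {m : ℤ} (hm : 0 ≤ m) {s : ℝ}
    (hs : s ∈ Icc ((m + 2 / 3 : ℝ)⁻¹) ((m + 1 / 3 : ℝ)⁻¹)) : ⌊s⁻¹⌋ = m := by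
  have hm' : (0 : ℝ) ≤ m := by exact_mod_cast hm
  have h₁ := inv_anti₀ ((by positivity : (0 : ℝ) < ((m : ℝ) + 2 / 3)⁻¹).trans_le hs.1) hs.2
  have h₂ := inv_anti₀ (by positivity) hs.1
  rw [inv_inv] at h₁ h₂
  rw [Int.floor_eq_iff]
  constructor <;> linarith

theorem tendsto_continuants_gaussDigits_atTop {x : ℝ} (hx : Irrational x) (h01 : x ∈ Ioo 0 1) :
    Tendsto (fun n => ((continuants (gaussDigits x n)).2.1 : ℝ)) atTop atTop := by
  refine tendsto_atTop_mono (fun n => ?_)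
    (tendsto_natCast_atTop_atTop.atTop_div_const (by norm_num : (0 : ℝ) < 2))
  have := length_add_one_le_two_mul_continuants (gaussDigits_pos hx h01 (n := n))
  rw [length_gaussDigits] at this
  linarith

theorem volume_setOf_forall_ge_gaussDigit_ne {m : ℤ} (hm : 0 < m) (N : ℕ) :
    volume {x ∈ Ioo (0 : ℝ) 1 | Irrational x ∧ ∀ k ≥ N, gaussDigit x k ≠ m} = 0 := by
  have hm' : (1 : ℝ) ≤ m := by exact_mod_cast hm
  -- tails in `[u₁, u₂]` have first partial quotient `m`, and `u₂ < 1` even for `m = 1`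
  set u₁ : ℝ := (m + 2 / 3)⁻¹
  set u₂ : ℝ := (m + 1 / 3)⁻¹
  have hu₁ : 0 < u₁ := by positivity
  have hu : u₁ < u₂ := inv_strictAnti₀ (by positivity) (by linarith)
  have hu₂ : u₂ < 1 := inv_lt_one_of_one_lt₀ (by linarith)
  refine measure_eq_zero_of_frequently_gap volume
    (ENNReal.ofReal_pos.2 (by linarith : 0 < (u₂ - u₁) / 8)) ?_
  rintro x ⟨hx01, hirr, -⟩
  have hr := tendsto_inv_atTop_nhdsGT_zero.comp
    ((tendsto_pow_atTop two_ne_zero).comp (tendsto_continuants_gaussDigits_atTop hirr hx01))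
  refine hr.frequently (Eventually.frequently (eventually_atTop.2 ⟨N, fun n hn => ?_⟩))
  have hw := gaussDigits_pos hirr hx01 (n := n)
  obtain ⟨S, hSB, hS, hSimage, hSvol⟩ := exists_interval_subset_ofDigits_image hw
    (Ioo_subset_Icc_self (iterate_gaussMap_mem_Ioo hirr hx01 n)) hu₁.le hu.le hu₂.le
  rw [ofDigits_gaussDigits] at hSB hSvol
  refine ⟨S, hSB, hS, Set.disjoint_left.2 fun y hyS hyF => ?_, hSvol⟩
  obtain ⟨s, hs, rfl⟩ := hSimage hyS
  have hG := iterate_gaussMap_ofDigits hw ⟨hu₁.trans_le hs.1, hs.2.trans_lt hu₂⟩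
  rw [length_gaussDigits] at hG
  exact hyF.2.2 n hn (by rw [gaussDigit, hG, floor_inv_eq_of_mem_Icc hm.le hs])

namespace GenContFract

theorem IntFractPair.stream_fr_eq_gaussMap_iterate {K : Type*} [DivisionRing K] [LinearOrder K]
    [FloorRing K] {v : K} {n : ℕ} {p : IntFractPair K} (hp : IntFractPair.stream v n = some p) :
    p.fr = gaussMap^[n] (Int.fract v) := by
  induction n generalizing p with
  | zero =>
    rw [IntFractPair.stream_zero, Option.some_inj] at hp
    subst hp
    rfl
  | succ n ih =>
    obtain ⟨q, hq, -, rfl⟩ := IntFractPair.succ_nth_stream_eq_some_iff.1 hp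
    rw [Function.iterate_succ_apply', ← ih hq]
    rfl

theorem not_terminatedAt_pred_of_stream_eq_some {K : Type*} [DivisionRing K] [LinearOrder K]
    [FloorRing K] {v : K} {n : ℕ} (hn : n ≠ 0) {p : IntFractPair K}
    (hp : IntFractPair.stream v n = some p) :
    ¬(GenContFract.of v).TerminatedAt (n - 1) := by
  rw [of_terminatedAt_n_iff_succ_nth_intFractPair_stream_eq_none, Nat.sub_add_cancel
    (Nat.one_le_iff_ne_zero.2 hn), hp]
  exact Option.some_ne_none p

theorem exists_int_contsAux {K : Type*} [Field K] [LinearOrder K] [FloorRing K] (v : K)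
    (n : ℕ) : ∃ a b : ℤ, (GenContFract.of v).contsAux n = ⟨a, b⟩ := by
  suffices ∀ n, (∃ a b : ℤ, (GenContFract.of v).contsAux n = ⟨a, b⟩) ∧
      ∃ a b : ℤ, (GenContFract.of v).contsAux (n + 1) = ⟨a, b⟩ from (this n).1
  intro n
  induction n with
  | zero =>
    exact ⟨⟨1, 0, by simp [zeroth_contAux_eq_one_zero]⟩,
      ⟨⌊v⌋, 1, by simp [first_contAux_eq_h_one, of_h_eq_floor]⟩⟩
  | succ n ih =>
    refine ⟨ih.2, ?_⟩
    obtain ⟨⟨a₀, b₀, h₀⟩, ⟨a₁, b₁, h₁⟩⟩ := ih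
    cases hs : (GenContFract.of v).s.get? n with
    | none => exact ⟨a₁, b₁, (contsAux_stable_step_of_terminated hs).trans h₁⟩
    | some gp =>
      obtain ⟨hgpa, z, hgpb⟩ := of_partNum_eq_one_and_exists_int_partDen_eq hs
      refine ⟨z * a₁ + a₀, z * b₁ + b₀, ?_⟩
      rw [contsAux_recurrence hs h₀ h₁, hgpa, hgpb]
      push_cast
      ring_nf

variable {K : Type*} [Field K] [LinearOrder K] [IsStrictOrderedRing K] [FloorRing K]

theorem abs_dens_mul_sub_nums {v : K} {n : ℕ} {p : IntFractPair K}
    (hp : IntFractPair.stream v n = some p) (hfr : p.fr ≠ 0)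
    (hB : 0 < (GenContFract.of v).dens n) :
    |(GenContFract.of v).dens n * v - (GenContFract.of v).nums n| =
      (p.fr⁻¹ * (GenContFract.of v).dens n + ((GenContFract.of v).contsAux n).b)⁻¹ := by
  set g := GenContFract.of v
  have herr := sub_convs_eq hp
  simp only [if_neg hfr] at herr
  rw [← nth_cont_eq_succ_nth_contAux, ← den_eq_conts_b, conv_eq_num_div_den] at herr
  have hD : 0 < p.fr⁻¹ * g.dens n + (g.contsAux n).b :=
    add_pos_of_pos_of_nonneg (mul_pos (inv_pos.2 ((IntFractPair.nth_stream_fr_nonneg hp).lt_of_ne'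
      hfr)) hB) zero_le_of_contsAux_b
  calc |g.dens n * v - g.nums n| = |g.dens n * (v - g.nums n / g.dens n)| := by
        rw [mul_sub, mul_div_cancel₀ _ hB.ne']
    _ = (p.fr⁻¹ * g.dens n + (g.contsAux n).b)⁻¹ := by
        rw [herr, abs_mul, abs_div, abs_pow, abs_neg, abs_one, one_pow, abs_of_pos hB,
          abs_of_pos (mul_pos hB hD)]
        field_simp

theorem one_le_contsAux_b {v : K} {n : ℕ} (hn : n ≠ 0) {p : IntFractPair K}
    (hp : IntFractPair.stream v n = some p) : 1 ≤ ((GenContFract.of v).contsAux n).b := by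
  have hnt := not_terminatedAt_pred_of_stream_eq_some hn hp
  exact le_trans (by exact_mod_cast Nat.fib_pos.2 (Nat.pos_of_ne_zero hn))
    (fib_le_of_contsAux_b (Or.inr fun h => hnt (terminated_stable (by omega) h)))

theorem contsAux_b_le_dens (v : K) (n : ℕ) :
    ((GenContFract.of v).contsAux n).b ≤ (GenContFract.of v).dens n := by
  cases n with
  | zero => simp [zeroth_contAux_eq_one_zero, den_eq_conts_b, nth_cont_eq_succ_nth_contAux,
      first_contAux_eq_h_one]
  | succ n =>
    rw [← nth_cont_eq_succ_nth_contAux, ← den_eq_conts_b]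
    exact of_den_mono

theorem dens_mul_abs_sub_round_mem_Icc {v : K} {n : ℕ} (hn : n ≠ 0) {p : IntFractPair K}
    (hp : IntFractPair.stream v n = some p) (hfr : p.fr ≠ 0) :
    (GenContFract.of v).dens n *
        |(GenContFract.of v).dens n * v - round ((GenContFract.of v).dens n * v)| ∈
      Icc ((⌊p.fr⁻¹⌋ + 2 : K)⁻¹) ((⌊p.fr⁻¹⌋ : K)⁻¹) := by
  set B := (GenContFract.of v).dens n
  set B' := ((GenContFract.of v).contsAux n).b
  set y := p.fr⁻¹
  have hB' : 1 ≤ B' := one_le_contsAux_b hn hp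
  have hB'B : B' ≤ B := contsAux_b_le_dens v n
  have hB : 1 ≤ B := hB'.trans hB'B
  have hy : 1 < y := (one_lt_inv₀ ((IntFractPair.nth_stream_fr_nonneg hp).lt_of_ne' hfr)).2
    (IntFractPair.nth_stream_fr_lt_one hp)
  have herr := abs_dens_mul_sub_nums hp hfr (by linarith)
  obtain ⟨a, _, ha⟩ := exists_int_contsAux v (n + 1)
  have hnum : (GenContFract.of v).nums n = a := by
    rw [num_eq_conts_a, nth_cont_eq_succ_nth_contAux, ha]
  have hround : round (B * v) = a := by
    have hD : 2 < y * B + B' := by nlinarith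
    have : |B * v - a| < 1 / 2 := by
      rw [← hnum, herr, one_div]
      exact inv_strictAnti₀ two_pos hD
    rw [round_eq_iff]
    constructor <;> linarith [abs_lt.1 this]
  have hval : B * (y * B + B')⁻¹ = (y + B' / B)⁻¹ := by
    field_simp
  have hfloor : (1 : K) ≤ ⌊y⌋ := by exact_mod_cast Int.le_floor.2 (by exact_mod_cast hy.le)
  have hratio : 0 < B' / B ∧ B' / B ≤ 1 :=
    ⟨by positivity, (div_le_one (by linarith)).2 hB'B⟩
  rw [hround, ← hnum, herr, hval]
  exact ⟨inv_anti₀ (by positivity) (by linarith [Int.lt_floor_add_one y]),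
    inv_anti₀ (by linarith) (by linarith [Int.floor_le y])⟩

end GenContFract

theorem GenContFract.exists_stream_eq_some_of_irrational {v : ℝ} (hv : Irrational v) (n : ℕ) :
    ∃ p, IntFractPair.stream v n = some p := by
  cases n with
  | zero => exact ⟨_, IntFractPair.stream_zero v⟩
  | succ n =>
    refine Option.ne_none_iff_exists'.1 fun h => ?_
    obtain ⟨q, hq⟩ := (terminates_iff_rat v).1
      ⟨n, of_terminatedAt_n_iff_succ_nth_intFractPair_stream_eq_none.2 h⟩
    exact hv ⟨q, hq.symm⟩

theorem dens_mul_abs_sub_round_mem_Icc_gaussDigit {α : ℝ} (hα : Irrational α)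
    (h01 : α ∈ Ioo 0 1) {n : ℕ} (hn : n ≠ 0) :
    (GenContFract.of α).dens n *
        |(GenContFract.of α).dens n * α - round ((GenContFract.of α).dens n * α)| ∈
      Icc ((gaussDigit α n + 2 : ℝ)⁻¹) ((gaussDigit α n : ℝ)⁻¹) := by
  obtain ⟨p, hp⟩ := exists_stream_eq_some_of_irrational hα n
  have hfr : p.fr = gaussMap^[n] α := by
    rw [IntFractPair.stream_fr_eq_gaussMap_iterate hp, Int.fract_eq_self.2 ⟨h01.1.le, h01.2⟩]
  have := dens_mul_abs_sub_round_mem_Icc hn hp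
    (by rw [hfr]; exact (irrational_iterate_gaussMap hα n).ne_zero)
  rwa [hfr] at this

theorem ae_frequently_gaussDigit_eq :
    ∀ᵐ x ∂(volume.restrict (Ioo (0 : ℝ) 1)), x ∈ Ioo 0 1 ∧ Irrational x ∧
      ∀ m : ℤ, 0 < m → ∃ᶠ k in atTop, gaussDigit x k = m := by
  have hirr : ∀ᵐ x : ℝ, Irrational x := (countable_range ((↑) : ℚ → ℝ)).ae_notMem volume
  have hdigit : ∀ᵐ x : ℝ, ∀ m : ℤ, ∀ N : ℕ, 0 < m →
      x ∉ {x ∈ Ioo (0 : ℝ) 1 | Irrational x ∧ ∀ k ≥ N, gaussDigit x k ≠ m} := by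
    refine ae_all_iff.2 fun m => ae_all_iff.2 fun N => ?_
    rcases lt_or_ge 0 m with hm | hm
    · exact (measure_eq_zero_iff_ae_notMem.1 (volume_setOf_forall_ge_gaussDigit_ne hm N)).mono
        fun x hx _ => hx
    · exact Eventually.of_forall fun x hm' => absurd hm' hm.not_gt
  filter_upwards [ae_restrict_mem measurableSet_Ioo, ae_restrict_of_ae hirr,
    ae_restrict_of_ae hdigit] with x hx01 hx hxdigit
  refine ⟨hx01, hx, fun m hm => frequently_atTop.2 fun N => ?_⟩
  by_contra! h
  exact hxdigit m N hm ⟨hx01, hx, h⟩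

/-- For almost every `α ∈ (0,1)` (with respect to Lebesgue measure): `α` is irrational
and for every `ε > 0` there exist `0 < δ < ε` and a subsequence `(n_k)` such that
`q_{n_k} ‖q_{n_k} α‖ → δ`, where `q_n` are the denominators of the continued fraction
convergents of `α` and `‖t‖` is the distance from `t` to the nearest integer. -/
theorem stmt10 :
    ∀ᵐ α ∂(volume.restrict (Set.Ioo (0 : ℝ) 1)),
      Irrational α ∧
      ∀ ε > (0 : ℝ), ∃ δ : ℝ, 0 < δ ∧ δ < ε ∧
        ∃ n : ℕ → ℕ, StrictMono n ∧
          Tendsto (fun k =>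
              (GenContFract.of α).dens (n k) *
                |(GenContFract.of α).dens (n k) * α -
                  round ((GenContFract.of α).dens (n k) * α)|)
            atTop (nhds δ) := by
  filter_upwards [ae_frequently_gaussDigit_eq] with α ⟨h01, hirr, hfreq⟩
  refine ⟨hirr, fun ε hε => ?_⟩
  obtain ⟨M, hM⟩ := exists_nat_gt ε⁻¹
  have hM₀ : (0 : ℝ) < M := (inv_pos.2 hε).trans hM
  have hmem : ∃ᶠ k in atTop, (GenContFract.of α).dens k *
      |(GenContFract.of α).dens k * α - round ((GenContFract.of α).dens k * α)| ∈
        Icc ((M + 2 : ℝ)⁻¹) ((M : ℝ)⁻¹) := by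
    refine ((hfreq M (by exact_mod_cast hM₀)).and_eventually (eventually_ne_atTop 0)).mono ?_
    rintro k ⟨hk, hk₀⟩
    simpa [hk] using dens_mul_abs_sub_round_mem_Icc_gaussDigit hirr h01 hk₀
  obtain ⟨δ, hδ, n, hn, hlim⟩ := isCompact_Icc.tendsto_subseq' hmem
  exact ⟨δ, (by positivity : (0 : ℝ) < ((M : ℝ) + 2)⁻¹).trans_le hδ.1,
    hδ.2.trans_lt (inv_lt_of_inv_lt₀ hε hM), n, hn, hlim⟩
end

section
/- Let f(x) = Σ_{i=1}^K d_i {x - β_i} + d be a piecewise linear function on 𝕋 and T x = x + α with α irrational. If {q_n α} = ‖q_n α‖ then for all x: f^{(q_n)}(T^{q_n} x) - f^{(q_n)}(x) = q_n ‖q_n α‖ S(f) - Σ_{i=1}^K d_i Σ_{j=0}^{q_n-1} 1_{[β_i - ‖q_n α‖, β_i)}(x + jα), where S(f) = Σ d_i, and each inner sum Σ_{j=0}^{q_n-1} 1_{[β_i - ‖q_n α‖, β_i)}(x + jα) equals 0 or 1. -/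
open MeasureTheory Filter

/-- The indicator of the circle interval `[d, e)` (understood mod 1: if `d > e` it is
`[d,1) ∪ [0,e)`), evaluated at the circle point `{x}`. -/
noncomputable def circInd (d e x : ℝ) : ℝ :=
  if d ≤ e then (if d ≤ Int.fract x ∧ Int.fract x < e then 1 else 0)
  else (if d ≤ Int.fract x ∨ Int.fract x < e then 1 else 0)

section Aux

open GenContFract

lemma myNotTerm {α : ℝ} (h : Irrational α) (n : ℕ) : ¬(GenContFract.of α).TerminatedAt n := by
  intro ht
  obtain ⟨q, hq⟩ := (terminates_iff_rat α).mp ⟨n, ht⟩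
  exact h ⟨q, hq.symm⟩

lemma myStream {α : ℝ} (h : Irrational α) (n : ℕ) :
    ∃ ifp, IntFractPair.stream α n = some ifp ∧ ifp.fr ≠ 0 := by
  have h1 : IntFractPair.stream α (n+1) ≠ none := by
    intro hn
    exact myNotTerm h n (of_terminatedAt_n_iff_succ_nth_intFractPair_stream_eq_none.mpr hn)
  obtain ⟨ifp1, hifp1⟩ := Option.ne_none_iff_exists'.1 h1
  obtain ⟨ifp, hs, hfr, -⟩ := IntFractPair.succ_nth_stream_eq_some_iff.1 hifp1
  exact ⟨ifp, hs, hfr⟩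

lemma myOneLeDen {α : ℝ} (h : Irrational α) (n : ℕ) : 1 ≤ (GenContFract.of α).dens n := by
  have h2 := succ_nth_fib_le_of_nth_den (K := ℝ) (v := α) (n := n) (Or.inr (myNotTerm h _))
  have : 1 ≤ Nat.fib (n+1) := Nat.fib_pos.mpr n.succ_pos
  calc (1:ℝ) ≤ (Nat.fib (n+1) : ℝ) := by exact_mod_cast this
    _ ≤ _ := h2

lemma mySign {α : ℝ} (h : Irrational α) (n : ℕ) :
    0 < (-1:ℝ)^n * ((GenContFract.of α).dens n * α - (GenContFract.of α).nums n) := by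
  obtain ⟨ifp, hs, hfr⟩ := myStream h n
  have key := sub_convs_eq hs
  simp only [hfr, if_false] at key
  set g := GenContFract.of α
  set B := (g.contsAux (n+1)).b with hB
  set pB := (g.contsAux n).b with hpB
  have hden : g.dens n = B := by rw [den_eq_conts_b, nth_cont_eq_succ_nth_contAux]
  have hfr0 : 0 < ifp.fr := lt_of_le_of_ne (IntFractPair.nth_stream_fr_nonneg hs) (Ne.symm hfr)
  have hBpos : 0 < B := by rw [← hden]; linarith [myOneLeDen h n]
  have hpB0 : 0 ≤ pB := zero_le_of_contsAux_b
  have hD : 0 < B * (ifp.fr⁻¹ * B + pB) := by positivity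
  have h2 : 0 < (-1:ℝ)^n * (α - g.convs n) := by
    rw [key]
    have hss : (-1:ℝ)^n * (-1:ℝ)^n = 1 := by rw [← mul_pow]; norm_num
    rw [mul_div_assoc']
    rw [hss]
    positivity
  have hc : g.convs n = g.nums n / g.dens n := conv_eq_num_div_den
  have hdpos : (0:ℝ) < g.dens n := by linarith [myOneLeDen h n]
  have := mul_pos hdpos h2
  rw [hc] at this
  have heq : g.dens n * ((-1:ℝ)^n * (α - g.nums n / g.dens n)) =
      (-1:ℝ)^n * (g.dens n * α - g.nums n) := by
    field_simp
  linarith [heq ▸ this]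

lemma myInt {α : ℝ} (h : Irrational α) :
    ∀ n, (∃ a : ℤ, ((GenContFract.of α).contsAux n).a = a) ∧
         (∃ b : ℤ, ((GenContFract.of α).contsAux n).b = b) := by
  intro n
  induction n using Nat.strong_induction_on with
  | _ n ih =>
    match n with
    | 0 => exact ⟨⟨1, by simp [zeroth_contAux_eq_one_zero]⟩,
                  ⟨0, by simp [zeroth_contAux_eq_one_zero]⟩⟩
    | 1 => exact ⟨⟨⌊α⌋, by simp [first_contAux_eq_h_one, of_h_eq_floor]⟩,
                  ⟨1, by simp [first_contAux_eq_h_one]⟩⟩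
    | (n+2) =>
      have hterm : (GenContFract.of α).s.get? n ≠ none := myNotTerm h n
      obtain ⟨gp, hgp⟩ := Option.ne_none_iff_exists'.1 hterm
      have ha1 : gp.a = 1 := of_partNum_eq_one (partNum_eq_s_a hgp)
      obtain ⟨z, hz⟩ := exists_int_eq_of_partDen (partDen_eq_s_b hgp)
      have hrec := contsAux_recurrence hgp rfl rfl
      obtain ⟨⟨a0, h0a⟩, ⟨b0, h0b⟩⟩ := ih n (by omega)
      obtain ⟨⟨a1, h1a⟩, ⟨b1, h1b⟩⟩ := ih (n+1) (by omega)
      refine ⟨⟨z * a1 + a0, ?_⟩, ⟨z * b1 + b0, ?_⟩⟩ <;>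
        rw [hrec] <;> simp [ha1, hz, h0a, h1a, h0b, h1b] <;> push_cast <;> ring

lemma myIntNum {α : ℝ} (h : Irrational α) (n : ℕ) :
    ∃ a : ℤ, (GenContFract.of α).nums n = a := by
  rw [num_eq_conts_a, nth_cont_eq_succ_nth_contAux]; exact (myInt h (n+1)).1

lemma myIntDen {α : ℝ} (h : Irrational α) (n : ℕ) :
    ∃ b : ℤ, (GenContFract.of α).dens n = b := by
  rw [den_eq_conts_b, nth_cont_eq_succ_nth_contAux]; exact (myInt h (n+1)).2

lemma myBest {α : ℝ} (h : Irrational α) (n : ℕ) (m p : ℤ)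
    (hm : 0 < m) (hmq : (m : ℝ) < (GenContFract.of α).dens n) :
    |(GenContFract.of α).dens n * α - round ((GenContFract.of α).dens n * α)|
      ≤ |(m : ℝ) * α - p| := by
  obtain ⟨An, hAn⟩ := myIntNum h n
  obtain ⟨Bn, hBn⟩ := myIntDen h n
  obtain ⟨An1, hAn1⟩ := myIntNum h (n+1)
  obtain ⟨Bn1, hBn1⟩ := myIntDen h (n+1)
  -- determinant
  have hdet : ((GenContFract.of α).nums n) * ((GenContFract.of α).dens (n+1)) -
      ((GenContFract.of α).dens n) * ((GenContFract.of α).nums (n+1)) = (-1:ℝ)^(n+1) :=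
    SimpContFract.determinant (s := SimpContFract.of α) (myNotTerm h n)
  rw [hAn, hBn, hAn1, hBn1] at hdet
  have det_int : An * Bn1 - Bn * An1 = (-1:ℤ)^(n+1) := by exact_mod_cast hdet
  -- size facts in ℤ
  have hBn1' : (1:ℝ) ≤ Bn := hBn ▸ myOneLeDen h n
  have hBnpos : 1 ≤ Bn := by exact_mod_cast hBn1'
  have hBmono : Bn ≤ Bn1 := by
    have := of_den_mono (v := α) (n := n)
    rw [hBn, hBn1] at this; exact_mod_cast this
  have hmBn : m < Bn := by rw [hBn] at hmq; exact_mod_cast hmq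
  -- signs
  set en : ℝ := (Bn : ℝ) * α - An with hen
  set en1 : ℝ := (Bn1 : ℝ) * α - An1 with hen1
  have hsn : 0 < (-1:ℝ)^n * en := by have := mySign h n; rwa [hAn, hBn] at this
  have hsn1 : 0 < (-1:ℝ)^(n+1) * en1 := by have := mySign h (n+1); rwa [hAn1, hBn1] at this
  have hsn1' : (-1:ℝ)^n * en1 < 0 := by
    have : (-1:ℝ)^(n+1) = -((-1:ℝ)^n) := by ring
    rw [this] at hsn1; linarith
  -- solve for a, b
  set t : ℤ := (-1)^(n+1) with ht
  have htt : t * t = 1 := by rw [ht, ← mul_pow]; norm_num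
  set a : ℤ := t * (Bn1 * p - An1 * m) with ha
  set b : ℤ := t * (An * m - Bn * p) with hb
  have hab1 : a * Bn + b * Bn1 = m := by
    rw [ha, hb]; rw [ht] at *
    linear_combination ((-1:ℤ)^(n+1) * m) * det_int + m * htt
  have hab2 : a * An + b * An1 = p := by
    rw [ha, hb]; rw [ht] at *
    linear_combination ((-1:ℤ)^(n+1) * p) * det_int + p * htt
  have c1 : (a:ℝ) * Bn + b * Bn1 = m := by exact_mod_cast congrArg (Int.cast : ℤ → ℝ) hab1
  have c2 : (a:ℝ) * An + b * An1 = p := by exact_mod_cast congrArg (Int.cast : ℤ → ℝ) hab2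
  have hreal : (m : ℝ) * α - p = a * en + b * en1 := by
    rw [hen, hen1]; linear_combination α * c1.symm + c2
  -- reduce to |en| ≤ |m α - p|
  have hround : |(GenContFract.of α).dens n * α - round ((GenContFract.of α).dens n * α)|
      ≤ |en| := by
    rw [hBn, hen]
    have := round_le ((Bn:ℝ) * α) An
    simpa using this
  refine le_trans hround ?_
  rw [hreal]
  set σ : ℝ := (-1)^n with hσ
  have hσabs : |σ| = 1 := by rw [hσ]; simp
  have henabs : |en| = σ * en := by
    rw [← abs_of_pos hsn, abs_mul, hσabs, one_mul]
  -- case analysis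
  rcases eq_or_ne b 0 with hb0 | hb0
  · -- b = 0 : m = a * Bn
    have hma : a * Bn = m := by rw [hb0] at hab1; simpa using hab1
    have hapos : 1 ≤ a := by nlinarith
    have ha1 : (1:ℝ) ≤ (a:ℝ) := by exact_mod_cast hapos
    rw [hb0]
    push_cast
    rw [zero_mul, add_zero, abs_mul]
    calc |en| = 1 * |en| := by ring
      _ ≤ |(a:ℝ)| * |en| := by
          have : (1:ℝ) ≤ |(a:ℝ)| := le_trans ha1 (le_abs_self _)
          nlinarith [abs_nonneg en]
  · rcases eq_or_ne a 0 with ha0 | ha0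
    · -- a = 0 : m = b * Bn1, impossible
      exfalso
      have hmb : b * Bn1 = m := by rw [ha0] at hab1; simpa using hab1
      rcases lt_or_ge 0 b with hbpos | hbneg
      · nlinarith
      · have : b ≤ -1 := by omega
        nlinarith
    · -- a ≠ 0, b ≠ 0 : opposite signs
      have hopp : (1 ≤ a ∧ b ≤ -1) ∨ (a ≤ -1 ∧ 1 ≤ b) := by
        rcases lt_or_ge 0 a with hap | han
        · rcases lt_or_ge 0 b with hbp | hbn
          · exfalso; nlinarith
          · exact Or.inl ⟨hap, by omega⟩
        · rcases lt_or_ge 0 b with hbp | hbn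
          · exact Or.inr ⟨by omega, hbp⟩
          · exfalso
            have ha' : a ≤ -1 := by omega
            have hb' : b ≤ -1 := by omega
            nlinarith
      set E : ℝ := (a:ℝ) * en + (b:ℝ) * en1 with hE
      have hEabs : σ * E ≤ |E| ∧ -(σ * E) ≤ |E| := by
        constructor
        · calc σ * E ≤ |σ * E| := le_abs_self _
            _ = |E| := by rw [abs_mul, hσabs, one_mul]
        · calc -(σ * E) ≤ |σ * E| := neg_le_abs _
            _ = |E| := by rw [abs_mul, hσabs, one_mul]
      have hexp : σ * E = (a:ℝ) * (σ * en) + (b:ℝ) * (σ * en1) := by rw [hE]; ring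
      rcases hopp with ⟨ha1, hb1⟩ | ⟨ha1, hb1⟩
      · have ha1' : (1:ℝ) ≤ (a:ℝ) := by exact_mod_cast ha1
        have hb1' : (b:ℝ) ≤ -1 := by exact_mod_cast hb1
        have p1 : σ * en ≤ (a:ℝ) * (σ * en) := le_mul_of_one_le_left hsn.le ha1'
        have p2 : (0:ℝ) ≤ (b:ℝ) * (σ * en1) := by
          have h2 := mul_nonneg (by linarith : (0:ℝ) ≤ -(b:ℝ))
            (by linarith : (0:ℝ) ≤ -(σ * en1))
          have h3 := neg_mul_neg (b:ℝ) (σ * en1)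
          linarith
        have key : σ * en ≤ σ * E := by rw [hexp]; linarith
        rw [henabs]; linarith [hEabs.1]
      · have ha1' : (a:ℝ) ≤ -1 := by exact_mod_cast ha1
        have hb1' : (1:ℝ) ≤ (b:ℝ) := by exact_mod_cast hb1
        have p1 : σ * en ≤ (-(a:ℝ)) * (σ * en) := le_mul_of_one_le_left hsn.le (by linarith)
        have h4 : (-(a:ℝ)) * (σ * en) = -((a:ℝ) * (σ * en)) := by ring
        have p2 : (b:ℝ) * (σ * en1) ≤ 0 := by
          have h2 := mul_nonneg (by linarith : (0:ℝ) ≤ (b:ℝ))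
            (by linarith : (0:ℝ) ≤ -(σ * en1))
          have h3 : (b:ℝ) * -(σ * en1) = -((b:ℝ) * (σ * en1)) := by ring
          linarith
        have key : σ * en ≤ -(σ * E) := by rw [hexp]; linarith
        rw [henabs]; linarith [hEabs.2]

end Aux

-- fract shift lemma
lemma fractShift {ε : ℝ} (hε0 : 0 < ε) (hε1 : ε < 1) (t : ℝ) :
    Int.fract (t + ε) - Int.fract t = ε - (if Int.fract (t + ε) < ε then 1 else 0) := by
  have h1 : Int.fract (t + ε) = Int.fract (Int.fract t + ε) := by
    conv_lhs => rw [← Int.fract_add_floor t]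
    rw [add_comm (Int.fract t) (⌊t⌋ : ℝ), add_assoc, Int.fract_intCast_add]
  set u := Int.fract t with hu
  have hu0 : 0 ≤ u := Int.fract_nonneg t
  have hu1 : u < 1 := Int.fract_lt_one t
  rcases lt_or_ge (u + ε) 1 with hc | hc
  · have h2 : Int.fract (u + ε) = u + ε := Int.fract_eq_self.mpr ⟨by linarith, hc⟩
    rw [h1, h2]
    rw [if_neg (by linarith)]
    ring
  · have h2 : Int.fract (u + ε) = u + ε - 1 := by
      have : Int.fract (u + ε) = Int.fract (u + ε - 1) := by
        rw [show u + ε - 1 = u + ε + (-1 : ℤ) by push_cast; ring, Int.fract_add_intCast]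
      rw [this, Int.fract_eq_self.mpr ⟨by linarith, by linarith⟩]
    rw [h1, h2, if_pos (by linarith)]
    ring

-- circInd characterization
lemma circIndChar {β ε : ℝ} (hβ0 : 0 ≤ β) (hβ1 : β < 1) (hε0 : 0 < ε) (hε1 : ε < 1) (y : ℝ) :
    circInd (Int.fract (β - ε)) β y = if Int.fract (y - β + ε) < ε then 1 else 0 := by
  have hfy : Int.fract (y - β + ε) = Int.fract (Int.fract y - β + ε) := by
    conv_lhs => rw [← Int.fract_add_floor y]
    rw [show Int.fract y + (⌊y⌋:ℝ) - β + ε = (Int.fract y - β + ε) + (⌊y⌋:ℤ) by push_cast; ring,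
      Int.fract_add_intCast]
  set t := Int.fract y with ht
  have ht0 : 0 ≤ t := Int.fract_nonneg y
  have ht1 : t < 1 := Int.fract_lt_one y
  rw [hfy]
  rcases le_or_gt 0 (β - ε) with hc | hc
  · have hd : Int.fract (β - ε) = β - ε := Int.fract_eq_self.mpr ⟨hc, by linarith⟩
    rw [circInd, hd, if_pos (by linarith : β - ε ≤ β)]
    rcases le_or_gt 0 (t - β + ε) with hv | hv
    · have h2 : Int.fract (t - β + ε) = t - β + ε := Int.fract_eq_self.mpr ⟨hv, by linarith⟩
      rw [h2]
      by_cases h3 : t < β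
      · rw [if_pos ⟨by linarith, h3⟩, if_pos (by linarith)]
      · rw [if_neg (by intro h; exact h3 h.2), if_neg (by push_neg at h3 ⊢; linarith)]
    · have h2 : Int.fract (t - β + ε) = t - β + ε + 1 := by
        conv_lhs => rw [show t - β + ε = (t - β + ε + 1) + (-1:ℤ) by push_cast; ring]
        rw [Int.fract_add_intCast]
        exact Int.fract_eq_self.mpr ⟨by linarith, by linarith⟩
      rw [h2]
      rw [if_neg (by intro h; linarith [h.1]), if_neg (by linarith)]
  · have hd : Int.fract (β - ε) = β - ε + 1 := by
      conv_lhs => rw [show β - ε = (β - ε + 1) + (-1:ℤ) by push_cast; ring]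
      rw [Int.fract_add_intCast]
      exact Int.fract_eq_self.mpr ⟨by linarith, by linarith⟩
    rw [circInd, hd, if_neg (by push_neg; linarith)]
    rcases lt_or_ge (t - β + ε) 1 with hv | hv
    · have h2 : Int.fract (t - β + ε) = t - β + ε := Int.fract_eq_self.mpr ⟨by linarith, hv⟩
      rw [h2]
      by_cases h3 : t < β
      · rw [if_pos (Or.inr h3), if_pos (by linarith)]
      · rw [if_neg, if_neg (by push_neg at h3 ⊢; linarith)]
        push_neg at h3 ⊢
        exact ⟨by linarith, h3⟩
    · have h2 : Int.fract (t - β + ε) = t - β + ε - 1 := by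
        conv_lhs => rw [show t - β + ε = (t - β + ε - 1) + (1:ℤ) by push_cast; ring]
        rw [Int.fract_add_intCast]
        exact Int.fract_eq_self.mpr ⟨by linarith, by linarith⟩
      rw [h2]
      rw [if_pos (Or.inl (by linarith)), if_pos (by linarith)]

/-- For the piecewise linear function `f(x) = Σᵢ dᵢ {x - βᵢ} + d` over the rotation by
an irrational `α`, if `q = q_n` is a denominator of `α` with `{qα} = ‖qα‖ = ε`, then
`f^(q)(T^q x) - f^(q)(x) = q ε S(f) - Σᵢ dᵢ Σ_{j<q} 1_[βᵢ-ε, βᵢ)(x + jα)`, where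
`S(f) = Σᵢ dᵢ`, and each inner sum equals `0` or `1`. -/
theorem stmt11 (α : ℝ) (hirr : Irrational α)
    (K : ℕ) (d : Fin K → ℝ) (β : Fin K → ℝ) (hβ : ∀ i, β i ∈ Set.Ico (0 : ℝ) 1)
    (dconst : ℝ)
    (f : ℝ → ℝ) (hf : ∀ x, f x = (∑ i, d i * Int.fract (x - β i)) + dconst)
    (n : ℕ) (q : ℕ) (hq : (q : ℝ) = (GenContFract.of α).dens n)
    (ε : ℝ) (hε : ε = |(q : ℝ) * α - round ((q : ℝ) * α)|)
    (hfrac : Int.fract ((q : ℝ) * α) = ε) :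
    (∀ x : ℝ,
      (∑ j ∈ Finset.range q, f (x + (q : ℝ) * α + (j : ℝ) * α)) -
        (∑ j ∈ Finset.range q, f (x + (j : ℝ) * α)) =
      (q : ℝ) * ε * (∑ i, d i) -
        ∑ i, d i * ∑ j ∈ Finset.range q,
          circInd (Int.fract (β i - ε)) (β i) (x + (j : ℝ) * α))
    ∧ (∀ x : ℝ, ∀ i : Fin K,
        (∑ j ∈ Finset.range q,
            circInd (Int.fract (β i - ε)) (β i) (x + (j : ℝ) * α)) = 0 ∨
        (∑ j ∈ Finset.range q,
            circInd (Int.fract (β i - ε)) (β i) (x + (j : ℝ) * α)) = 1) := by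
  have hq1 : 1 ≤ (q:ℝ) := hq ▸ myOneLeDen hirr n
  have hq0 : q ≠ 0 := by
    intro h0; rw [h0] at hq1; norm_num at hq1
  have hε0 : 0 < ε := by
    rw [← hfrac]
    have hi : Irrational ((q:ℝ) * α) := hirr.natCast_mul hq0
    rcases (Int.fract_nonneg ((q:ℝ)*α)).lt_or_eq with h | h
    · exact h
    · exfalso
      have h2 : (q:ℝ)*α = (⌊(q:ℝ)*α⌋ : ℝ) := by
        have := Int.fract_add_floor ((q:ℝ)*α); rw [← h] at this; linarith
      exact hi.ne_int _ h2
  have hε1 : ε < 1 := by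
    rw [hε]; have := abs_sub_round ((q:ℝ)*α); linarith
  have hqa : ∀ y : ℝ, Int.fract (y + (q:ℝ)*α) = Int.fract (y + ε) := by
    intro y
    have h1 : y + (q:ℝ)*α = (y + ε) + (⌊(q:ℝ)*α⌋ : ℤ) := by
      have := Int.fract_add_floor ((q:ℝ)*α); rw [hfrac] at this
      push_cast; linarith
    rw [h1, Int.fract_add_intCast]
  -- per-term computation
  have hterm : ∀ y : ℝ, f (y + (q:ℝ)*α) - f y
      = ε * (∑ i, d i) - ∑ i, d i * circInd (Int.fract (β i - ε)) (β i) y := by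
    intro y
    rw [hf, hf]
    have hpt : ∀ i : Fin K,
        d i * Int.fract (y + (q:ℝ)*α - β i) - d i * Int.fract (y - β i)
        = d i * ε - d i * circInd (Int.fract (β i - ε)) (β i) y := by
      intro i
      have h2 : Int.fract (y + (q:ℝ)*α - β i) = Int.fract ((y - β i) + ε) := by
        rw [show y + (q:ℝ)*α - β i = (y - β i) + (q:ℝ)*α by ring]
        exact hqa (y - β i)
      have h3 := fractShift hε0 hε1 (y - β i)
      have h4 := circIndChar (hβ i).1 (hβ i).2 hε0 hε1 y
      rw [show y - β i + ε = (y - β i) + ε by ring] at h4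
      rw [h2, h4]
      linear_combination (d i) * h3
    have hsum : (∑ i, d i * Int.fract (y + (q:ℝ)*α - β i))
        - (∑ i, d i * Int.fract (y - β i))
        = ∑ i, (d i * ε - d i * circInd (Int.fract (β i - ε)) (β i) y) := by
      rw [← Finset.sum_sub_distrib]
      exact Finset.sum_congr rfl (fun i _ => hpt i)
    have hsum2 : ∑ i, (d i * ε - d i * circInd (Int.fract (β i - ε)) (β i) y)
        = ε * (∑ i, d i) - ∑ i, d i * circInd (Int.fract (β i - ε)) (β i) y := by
      rw [Finset.sum_sub_distrib]
      congr 1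
      rw [← Finset.sum_mul]
      ring
    linarith [hsum, hsum2]
  constructor
  · intro x
    have step1 : (∑ j ∈ Finset.range q, f (x + (q : ℝ) * α + (j : ℝ) * α)) -
        (∑ j ∈ Finset.range q, f (x + (j : ℝ) * α))
        = ∑ j ∈ Finset.range q,
            (ε * (∑ i, d i) - ∑ i, d i * circInd (Int.fract (β i - ε)) (β i) (x + (j:ℝ)*α)) := by
      rw [← Finset.sum_sub_distrib]
      refine Finset.sum_congr rfl (fun j _ => ?_)
      rw [show x + (q:ℝ)*α + (j:ℝ)*α = (x + (j:ℝ)*α) + (q:ℝ)*α by ring]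
      exact hterm (x + (j:ℝ)*α)
    rw [step1, Finset.sum_sub_distrib, Finset.sum_const, Finset.card_range, nsmul_eq_mul]
    congr 1
    · ring
    · rw [Finset.sum_comm]
      exact Finset.sum_congr rfl (fun i _ => (Finset.mul_sum _ _ _).symm)
  · intro x i
    have hchar : ∀ j : ℕ, circInd (Int.fract (β i - ε)) (β i) (x + (j:ℝ)*α)
        = if Int.fract (x + (j:ℝ)*α - β i + ε) < ε then (1:ℝ) else 0 :=
      fun j => circIndChar (hβ i).1 (hβ i).2 hε0 hε1 _
    simp only [hchar]
    rw [Finset.sum_boole]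
    have key : ∀ j k : ℕ, j < k → k < q →
        Int.fract (x + (j:ℝ)*α - β i + ε) < ε →
        Int.fract (x + (k:ℝ)*α - β i + ε) < ε → False := by
      intro j k hjk hkq hPj hPk
      set θj := x + (j:ℝ)*α - β i + ε with hθj
      set θk := x + (k:ℝ)*α - β i + ε with hθk
      set m : ℤ := (k : ℤ) - j with hm
      have hm0 : 0 < m := by omega
      have hmq : (m:ℝ) < (GenContFract.of α).dens n := by
        rw [← hq, hm]
        push_cast
        have : (k:ℝ) < q := by exact_mod_cast hkq
        have : (0:ℝ) ≤ (j:ℝ) := by positivity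
        linarith
      set P0 : ℤ := ⌊θk⌋ - ⌊θj⌋ with hP0
      have hmα : (m:ℝ) * α - P0 = Int.fract θk - Int.fract θj := by
        rw [Int.fract, Int.fract, hP0, hm, hθk, hθj]
        push_cast
        ring
      have hlt : |(m:ℝ)*α - P0| < ε := by
        rw [hmα, abs_lt]
        constructor
        · have := Int.fract_nonneg θk; linarith
        · have := Int.fract_nonneg θj; linarith
      have hbest := myBest hirr n m P0 hm0 hmq
      rw [← hq] at hbest
      rw [← hε] at hbest
      linarith
    have hcard : ((Finset.range q).filter
        (fun j : ℕ => Int.fract (x + (j:ℝ)*α - β i + ε) < ε)).card ≤ 1 := by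
      rw [Finset.card_le_one]
      intro j hj k hk
      simp only [Finset.mem_filter, Finset.mem_range] at hj hk
      rcases lt_trichotomy j k with h | h | h
      · exact absurd (key j k h hk.1 hj.2 hk.2) (fun a => a)
      · exact h
      · exact absurd (key k j h hj.1 hk.2 hj.2) (fun a => a)
    rcases Nat.le_one_iff_eq_zero_or_eq_one.mp hcard with h | h
    · left; rw [h]; norm_num
    · right; rw [h]; norm_num
end

section
/- For irrational α with convergents p_n/q_n: q_{n+1}‖q_n α‖ → 1 along a subsequence (k_n) if and only if a_{k_n+1} + a_{k_n+2} → ∞, where a_j are the partial quotients. -/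
open Filter

private lemma round_eq_of_abs_sub_lt_half' {x : ℝ} {m : ℤ} (h : |x - m| < 1/2) :
    round x = m := by
  rw [round_eq, Int.floor_eq_iff]
  rw [abs_lt] at h
  constructor
  · linarith [h.1]
  · push_cast; linarith [h.2]

/-- For irrational `α ∈ (0,1)` with convergent denominators `qₙ` and partial quotients
`aₙ` (so that `α = [0; a₁, a₂, …]`), along a subsequence `(kₙ)`:
`q_{kₙ+1} ‖q_{kₙ} α‖ → 1` if and only if `a_{kₙ+1} + a_{kₙ+2} → ∞`. -/
theorem stmt13 (α : ℝ) (hα : α ∈ Set.Ioo (0 : ℝ) 1) (hirr : Irrational α)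
    (a : ℕ → ℝ) (ha : ∀ m, a m = (((GenContFract.of α).partDens.get? m).getD 0))
    (qd : ℕ → ℝ) (hqd : ∀ m, qd m = (GenContFract.of α).dens m)
    (k : ℕ → ℕ) (hk : StrictMono k) :
    Tendsto (fun m => qd (k m + 1) * |qd (k m) * α - round (qd (k m) * α)|)
        atTop (nhds 1)
      ↔ Tendsto (fun m => a (k m) + a (k m + 1)) atTop atTop := by
  -- non-termination
  have hterm : ¬(GenContFract.of α).Terminates := fun h => by
    obtain ⟨q, hq⟩ := (GenContFract.terminates_iff_rat α).1 h
    exact hirr ⟨q, hq.symm⟩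
  have hnt : ∀ n, ¬(GenContFract.of α).TerminatedAt n := fun n h => hterm ⟨n, h⟩
  have hstream : ∀ n, ∃ p, GenContFract.IntFractPair.stream α n = some p := by
    intro n
    cases n with
    | zero => exact ⟨_, GenContFract.IntFractPair.stream_zero α⟩
    | succ m =>
      rcases h : GenContFract.IntFractPair.stream α (m+1) with _ | p
      · exact absurd
          (GenContFract.of_terminatedAt_n_iff_succ_nth_intFractPair_stream_eq_none.2 h) (hnt m)
      · exact ⟨p, rfl⟩
  choose ifp hifp using hstream
  -- fractional parts are in (0,1)
  have hfrpos : ∀ n, 0 < (ifp n).fr := by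
    intro n
    rcases (GenContFract.IntFractPair.nth_stream_fr_nonneg (hifp n)).lt_or_eq with h | h
    · exact h
    · exfalso
      have h2 := GenContFract.IntFractPair.stream_eq_none_of_fr_eq_zero (hifp n) h.symm
      rw [hifp (n+1)] at h2
      cases h2
  have hfrlt1 : ∀ n, (ifp n).fr < 1 :=
    fun n => GenContFract.IntFractPair.nth_stream_fr_lt_one (hifp n)
  have hsucc : ∀ n, ifp (n+1) = GenContFract.IntFractPair.of ((ifp n).fr)⁻¹ := by
    intro n
    have h2 := GenContFract.IntFractPair.stream_succ_of_some (hifp n) (hfrpos n).ne'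
    rw [hifp (n+1)] at h2
    exact Option.some_injective _ h2
  have hs : ∀ n, (GenContFract.of α).s.get? n = some ⟨1, ((ifp (n+1)).b : ℝ)⟩ :=
    fun n => GenContFract.get?_of_eq_some_of_succ_get?_intFractPair_stream (hifp (n+1))
  have haq : ∀ n, a n = ((ifp (n+1)).b : ℝ) := by
    intro n
    rw [ha n, GenContFract.partDen_eq_s_b (hs n)]
    rfl
  have ha1 : ∀ n, (1:ℝ) ≤ a n := by
    intro n
    rw [haq n]
    exact_mod_cast GenContFract.IntFractPair.one_le_succ_nth_stream_b (hifp (n+1))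
  have hinv : ∀ n, ((ifp n).fr)⁻¹ = a n + (ifp (n+1)).fr := by
    intro n
    rw [haq n, hsucc n]
    simp [GenContFract.IntFractPair.of]
  -- denominators
  have hcb : ∀ n, ((GenContFract.of α).contsAux (n+1)).b = qd n := by
    intro n
    rw [hqd n, GenContFract.den_eq_conts_b, GenContFract.nth_cont_eq_succ_nth_contAux]
  have hq1le : ∀ n, (1:ℝ) ≤ qd n := by
    intro n
    rw [hqd n]
    calc (1:ℝ) ≤ (Nat.fib (n+1) : ℝ) := by exact_mod_cast Nat.fib_pos.2 n.succ_pos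
    _ ≤ _ := GenContFract.succ_nth_fib_le_of_nth_den (Or.inr (hnt (n-1)))
  have hqpos : ∀ n, 0 < qd n := fun n => lt_of_lt_of_le one_pos (hq1le n)
  have hqmono : ∀ n, qd n ≤ qd (n+1) := by
    intro n; rw [hqd n, hqd (n+1)]; exact GenContFract.of_den_mono
  have hqrec : ∀ n, qd (n+2) = a (n+1) * qd (n+1) + qd n := by
    intro n
    rw [hqd (n+2), hqd (n+1), hqd n, haq (n+1)]
    simpa using GenContFract.dens_recurrence (hs (n+1)) rfl rfl
  -- numerators are integers
  have hint : ∀ n, (∃ z : ℤ, ((GenContFract.of α).contsAux n).a = (z:ℝ)) ∧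
      (∃ z : ℤ, ((GenContFract.of α).contsAux n).b = (z:ℝ)) := by
    intro n
    induction n using Nat.strong_induction_on with
    | _ n IH =>
      match n with
      | 0 =>
        refine ⟨⟨1, ?_⟩, ⟨0, ?_⟩⟩ <;> simp [GenContFract.zeroth_contAux_eq_one_zero]
      | 1 =>
        refine ⟨⟨⌊α⌋, ?_⟩, ⟨1, ?_⟩⟩ <;>
          simp [GenContFract.first_contAux_eq_h_one, GenContFract.of_h_eq_floor]
      | (n+2) =>
        obtain ⟨⟨pa, hpa⟩, ⟨pb, hpb⟩⟩ := IH n (by omega)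
        obtain ⟨⟨ca, hca'⟩, ⟨cb, hcb'⟩⟩ := IH (n+1) (by omega)
        rw [GenContFract.contsAux_recurrence (hs n) rfl rfl]
        refine ⟨⟨(ifp (n+1)).b * ca + pa, ?_⟩, ⟨(ifp (n+1)).b * cb + pb, ?_⟩⟩ <;>
          · simp only [hpa, hpb, hca', hcb']
            push_cast
            ring
  have hnum : ∀ n, ∃ z : ℤ, (GenContFract.of α).nums n = (z:ℝ) := by
    intro n
    rw [GenContFract.num_eq_conts_a, GenContFract.nth_cont_eq_succ_nth_contAux]
    exact (hint (n+1)).1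
  -- key identity
  have hkey : ∀ j, qd (j+1) * α - (GenContFract.of α).nums (j+1)
      = (-1)^(j+1) / (((ifp (j+1)).fr)⁻¹ * qd (j+1) + qd j) := by
    intro j
    have h1 := GenContFract.sub_convs_eq (hifp (j+1))
    simp only [if_neg (hfrpos (j+1)).ne'] at h1
    rw [GenContFract.conv_eq_num_div_den, hcb (j+1), hcb j, ← hqd (j+1)] at h1
    have hqne : qd (j+1) ≠ 0 := (hqpos (j+1)).ne'
    have hD : 0 < ((ifp (j+1)).fr)⁻¹ * qd (j+1) + qd j :=
      add_pos (mul_pos (inv_pos.2 (hfrpos (j+1))) (hqpos (j+1))) (hqpos j)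
    set x := ((ifp (j+1)).fr)⁻¹ with hxdef
    have hx0 : 0 < x := inv_pos.2 (hfrpos (j+1))
    have hD' : 0 < x * qd (j+1) + qd j :=
      add_pos (mul_pos hx0 (hqpos (j+1))) (hqpos j)
    have hM : qd (j+1) * (x * qd (j+1) + qd j) ≠ 0 :=
      (mul_pos (hqpos (j+1)) hD').ne'
    rw [eq_div_iff hD'.ne']
    have h2 := (eq_div_iff hM).1 h1
    rw [← h2]
    field_simp
  -- main formula: q_{j+2} ‖q_{j+1} α‖ = 1 / (1 + u) where u = fr_{j+2} q_{j+1} / q_{j+2}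
  have hmain : ∀ j, qd (j+2) * |qd (j+1) * α - round (qd (j+1) * α)|
      = 1 / (1 + (ifp (j+2)).fr * qd (j+1) / qd (j+2)) := by
    intro j
    obtain ⟨p, hp⟩ := hnum (j+1)
    have hD : 0 < ((ifp (j+1)).fr)⁻¹ * qd (j+1) + qd j :=
      add_pos (mul_pos (inv_pos.2 (hfrpos (j+1))) (hqpos (j+1))) (hqpos j)
    have habs : |qd (j+1) * α - (p:ℝ)| = 1 / (((ifp (j+1)).fr)⁻¹ * qd (j+1) + qd j) := by
      rw [← hp, hkey j, abs_div, abs_pow, abs_neg, abs_one, one_pow, abs_of_pos hD]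
    have hxgt : 1 < ((ifp (j+1)).fr)⁻¹ := by
      rw [hinv (j+1)]
      have h1 := ha1 (j+1); have h2 := hfrpos (j+2); linarith
    have hround : round (qd (j+1) * α) = p := by
      apply round_eq_of_abs_sub_lt_half'
      rw [habs]
      have h1 : (2:ℝ) < ((ifp (j+1)).fr)⁻¹ * qd (j+1) + qd j := by
        have h2 := hq1le (j+1); have h3 := hq1le j; nlinarith
      rw [div_lt_div_iff₀ hD (by norm_num)]
      linarith
    rw [hround, habs]
    have hden : ((ifp (j+1)).fr)⁻¹ * qd (j+1) + qd j
        = qd (j+2) + (ifp (j+2)).fr * qd (j+1) := by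
      rw [hinv (j+1), hqrec j]; ring
    rw [hden]
    have hQ := hqpos (j+2)
    have hc : 0 < (ifp (j+2)).fr * qd (j+1) := mul_pos (hfrpos (j+2)) (hqpos (j+1))
    have h1 : 1 + (ifp (j+2)).fr * qd (j+1) / qd (j+2)
        = (qd (j+2) + (ifp (j+2)).fr * qd (j+1)) / qd (j+2) := by
      field_simp
    rw [h1, one_div_div, mul_one_div]
  -- bounds on u
  have hub : ∀ j, (ifp (j+2)).fr * qd (j+1) / qd (j+2) ≤ 1 / (a (j+1) * a (j+2)) := by
    intro j
    have hA := ha1 (j+1); have hB := ha1 (j+2)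
    have hq1 := hqpos (j+1); have hq2 := hqpos (j+2); have hq0 := hqpos j
    have hfr2 := hfrpos (j+2)
    have hfrB : (ifp (j+2)).fr * a (j+2) < 1 := by
      have hx : a (j+2) < ((ifp (j+2)).fr)⁻¹ := by
        rw [hinv (j+2)]
        have := hfrpos (j+3); linarith
      calc (ifp (j+2)).fr * a (j+2) < (ifp (j+2)).fr * ((ifp (j+2)).fr)⁻¹ :=
            mul_lt_mul_of_pos_left hx hfr2
        _ = 1 := mul_inv_cancel₀ hfr2.ne'
    have hrec := hqrec j
    rw [div_le_div_iff₀ hq2 (by nlinarith)]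
    nlinarith [mul_pos hq1 hfr2, mul_pos hq1 (lt_of_lt_of_le one_pos hA),
      mul_le_mul_of_nonneg_right hfrB.le (mul_pos hq1 (lt_of_lt_of_le one_pos hA)).le]
  have hlb : ∀ j, 1 / ((a (j+1) + 1) * (a (j+2) + 1)) ≤ (ifp (j+2)).fr * qd (j+1) / qd (j+2) := by
    intro j
    have hA := ha1 (j+1); have hB := ha1 (j+2)
    have hq1 := hqpos (j+1); have hq2 := hqpos (j+2); have hq0 := hqpos j
    have hfr2 := hfrpos (j+2)
    have hfrB : 1 < (ifp (j+2)).fr * (a (j+2) + 1) := by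
      have hx : ((ifp (j+2)).fr)⁻¹ < a (j+2) + 1 := by
        rw [hinv (j+2)]
        have := hfrlt1 (j+3); linarith
      calc (1:ℝ) = (ifp (j+2)).fr * ((ifp (j+2)).fr)⁻¹ := (mul_inv_cancel₀ hfr2.ne').symm
        _ < (ifp (j+2)).fr * (a (j+2) + 1) := mul_lt_mul_of_pos_left hx hfr2
    have hq2le : qd (j+2) ≤ (a (j+1) + 1) * qd (j+1) := by
      have := hqmono j
      rw [hqrec j]; nlinarith
    rw [div_le_div_iff₀ (by nlinarith) hq2]
    calc 1 * qd (j+2) = qd (j+2) := one_mul _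
      _ ≤ (a (j+1) + 1) * qd (j+1) := hq2le
      _ = 1 * ((a (j+1) + 1) * qd (j+1)) := (one_mul _).symm
      _ ≤ ((ifp (j+2)).fr * (a (j+2) + 1)) * ((a (j+1) + 1) * qd (j+1)) := by
          apply mul_le_mul_of_nonneg_right hfrB.le
          nlinarith
      _ = (ifp (j+2)).fr * qd (j+1) * ((a (j+1) + 1) * (a (j+2) + 1)) := by ring
  -- positivity of u along the subsequence
  have hUpos : ∀ m, 0 < (ifp (k m + 1)).fr * qd (k m) / qd (k m + 1) := fun m =>
    div_pos (mul_pos (hfrpos (k m + 1)) (hqpos (k m))) (hqpos (k m + 1))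
  -- the goal function eventually equals 1/(1+u)
  have hevEq : (fun m => qd (k m + 1) * |qd (k m) * α - round (qd (k m) * α)|)
      =ᶠ[atTop] (fun m => 1 / (1 + (ifp (k m + 1)).fr * qd (k m) / qd (k m + 1))) := by
    filter_upwards [eventually_ge_atTop 1] with m hm
    have hk1 : 1 ≤ k m := le_trans hm hk.le_apply
    obtain ⟨j, hj⟩ : ∃ j, k m = j + 1 := ⟨k m - 1, by omega⟩
    rw [hj]
    exact hmain j
  rw [tendsto_congr' hevEq]
  constructor
  · intro h
    -- u → 0
    have hU0 : Tendsto (fun m => (ifp (k m + 1)).fr * qd (k m) / qd (k m + 1)) atTop (nhds 0) := by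
      have h3 := h.inv₀ one_ne_zero
      simp only [one_div, inv_inv, inv_one] at h3
      have h4 := h3.sub_const 1
      simpa using h4
    -- (a+1)(b+1) → ∞
    have hinvU : Tendsto (fun m => ((ifp (k m + 1)).fr * qd (k m) / qd (k m + 1))⁻¹)
        atTop atTop := by
      apply Filter.Tendsto.inv_tendsto_nhdsGT_zero
      exact tendsto_nhdsWithin_iff.2 ⟨hU0, Eventually.of_forall hUpos⟩
    have hG : Tendsto (fun m => (a (k m) + 1) * (a (k m + 1) + 1)) atTop atTop := by
      apply tendsto_atTop_mono' atTop ?_ hinvU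
      filter_upwards [eventually_ge_atTop 1] with m hm
      have hk1 : 1 ≤ k m := le_trans hm hk.le_apply
      obtain ⟨j, hj⟩ : ∃ j, k m = j + 1 := ⟨k m - 1, by omega⟩
      rw [hj]
      have hG0 : 0 < (a (j+1) + 1) * (a (j+1+1) + 1) := by
        have := ha1 (j+1); have := ha1 (j+1+1); nlinarith
      have h5 : ((a (j+1) + 1) * (a (j+1+1) + 1))⁻¹
          ≤ (ifp (j+1+1)).fr * qd (j+1) / qd (j+1+1) := by
        rw [← one_div]
        exact hlb j
      calc ((ifp (j+1+1)).fr * qd (j+1) / qd (j+1+1))⁻¹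
          ≤ (((a (j+1) + 1) * (a (j+1+1) + 1))⁻¹)⁻¹ :=
            inv_anti₀ (inv_pos.2 hG0) h5
        _ = (a (j+1) + 1) * (a (j+1+1) + 1) := inv_inv _
    rw [tendsto_atTop]
    intro C
    filter_upwards [hG.eventually_ge_atTop ((|C| + 1)^2)] with m hm2
    have hA := ha1 (k m); have hB := ha1 (k m + 1)
    have hS2 : (a (k m) + 1) * (a (k m + 1) + 1) ≤ (a (k m) + a (k m + 1) + 1)^2 := by
      nlinarith [sq_nonneg (a (k m)), sq_nonneg (a (k m + 1)),
        mul_nonneg (by linarith : (0:ℝ) ≤ a (k m)) (by linarith : (0:ℝ) ≤ a (k m + 1))]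
    have h5 : (|C| + 1)^2 ≤ (a (k m) + a (k m + 1) + 1)^2 := le_trans hm2 hS2
    have h6 : |C| + 1 ≤ a (k m) + a (k m + 1) + 1 :=
      le_of_pow_le_pow_left₀ two_ne_zero (by linarith) h5
    linarith [le_abs_self C]
  · intro h
    -- product → ∞
    have hP : Tendsto (fun m => a (k m) * a (k m + 1)) atTop atTop := by
      apply tendsto_atTop_mono' atTop ?_
        (tendsto_atTop_add_const_right atTop (-1) h)
      apply Eventually.of_forall
      intro m
      have hA := ha1 (k m); have hB := ha1 (k m + 1)
      show a (k m) + a (k m + 1) + (-1) ≤ a (k m) * a (k m + 1)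
      nlinarith [mul_nonneg (by linarith : (0:ℝ) ≤ a (k m) - 1)
        (by linarith : (0:ℝ) ≤ a (k m + 1) - 1)]
    have hIP : Tendsto (fun m => (a (k m) * a (k m + 1))⁻¹) atTop (nhds 0) :=
      hP.inv_tendsto_atTop
    -- u → 0 by squeezing
    have hU0 : Tendsto (fun m => (ifp (k m + 1)).fr * qd (k m) / qd (k m + 1)) atTop (nhds 0) := by
      apply squeeze_zero' (Eventually.of_forall fun m => (hUpos m).le) ?_ hIP
      filter_upwards [eventually_ge_atTop 1] with m hm
      have hk1 : 1 ≤ k m := le_trans hm hk.le_apply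
      obtain ⟨j, hj⟩ : ∃ j, k m = j + 1 := ⟨k m - 1, by omega⟩
      rw [hj, ← one_div]
      exact hub j
    -- conclude 1/(1+u) → 1
    have h2 : Tendsto (fun m => 1 + (ifp (k m + 1)).fr * qd (k m) / qd (k m + 1))
        atTop (nhds (1 + 0)) := tendsto_const_nhds.add hU0
    rw [add_zero] at h2
    have h3 := h2.inv₀ one_ne_zero
    simpa [one_div] using h3
end

section
/- For odd r and the maps A : ℝ^r → ℝ^{r+1}, A(x₁,…,x_r) = (Σ_{k=1}^r (-1)^{k+1} binom(r+1,k) x_k, x₁,…,x_r), R_c(x₀,…,x_r) = (x₀+c, x₁,…,x_r), θ(x₀,x₁,…,x_r) = (x₀, x₀-x_r, …, x₀-x₁), and B_c(x₁,…,x_r) = (Σ_{k=1}^r (-1)^{k+1} binom(r+1,k) x_k - x_{r+1-l} + c)_{l=1}^r, the identity θ ∘ R_c ∘ A = R_{-c} ∘ A ∘ B_c holds. -/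
/-- `Σ_{k=1}^r (-1)^{k+1} C(r+1,k) x_k`, where `x : Fin r → ℝ` lists `(x₁, …, x_r)`. -/
def headSum (r : ℕ) (x : Fin r → ℝ) : ℝ :=
  ∑ j : Fin r, (-1 : ℝ) ^ (j : ℕ) * (((r + 1).choose ((j : ℕ) + 1)) : ℝ) * x j

/-- `A(x₁,…,x_r) = (Σ_{k=1}^r (-1)^{k+1} C(r+1,k) x_k, x₁, …, x_r)`. -/
def mapA (r : ℕ) (x : Fin r → ℝ) : Fin (r + 1) → ℝ :=
  Fin.cons (headSum r x) x

/-- `R_c(x₀, x₁, …, x_r) = (x₀ + c, x₁, …, x_r)`. -/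
def mapR (r : ℕ) (c : ℝ) (y : Fin (r + 1) → ℝ) : Fin (r + 1) → ℝ :=
  Fin.cons (y 0 + c) (fun j : Fin r => y j.succ)

/-- `θ(x₀, x₁, …, x_r) = (x₀, x₀ - x_r, …, x₀ - x₁)`. -/
def mapTheta (r : ℕ) (y : Fin (r + 1) → ℝ) : Fin (r + 1) → ℝ :=
  Fin.cons (y 0) (fun j : Fin r => y 0 - y ⟨r - (j : ℕ), by have := j.isLt; omega⟩)

/-- `B_c(x₁,…,x_r) = (Σ_{k=1}^r (-1)^{k+1} C(r+1,k) x_k - x_{r+1-l} + c)_{l=1}^r`. -/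
def mapB (r : ℕ) (c : ℝ) (x : Fin r → ℝ) : Fin r → ℝ :=
  fun l => headSum r x - x ⟨r - 1 - (l : ℕ), by have := l.isLt; omega⟩ + c

open Finset in
lemma coefSum (r : ℕ) (hr : Odd r) :
    ∑ j : Fin r, (-1:ℝ)^(j:ℕ) * (((r+1).choose (j+1)) : ℝ) = 2 := by
  have h0 : ∑ i ∈ range (r + 2), (-1:ℝ)^i * ((r+1).choose i : ℝ) = 0 := by
    have := Int.alternating_sum_range_choose_of_ne (n := r+1) (by omega)
    have := congrArg (fun z : ℤ => (z : ℝ)) this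
    push_cast at this
    convert this using 2
  rw [Fin.sum_univ_eq_sum_range (fun j => (-1:ℝ)^j * (((r+1).choose (j+1)) : ℝ))]
  have h1 : ∑ i ∈ range (r + 2), (-1:ℝ)^i * ((r+1).choose i : ℝ)
      = (-1:ℝ)^0 * ((r+1).choose 0 : ℝ)
        + (∑ j ∈ range r, (-1:ℝ)^(j+1) * ((r+1).choose (j+1) : ℝ))
        + (-1:ℝ)^(r+1) * ((r+1).choose (r+1) : ℝ) := by
    rw [Finset.sum_range_succ, Finset.sum_range_succ']
    ring
  obtain ⟨k, hk⟩ := hr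
  subst hk
  rw [h0] at h1
  simp [Nat.choose_self, pow_succ, pow_mul] at h1
  linarith

lemma revSum (r : ℕ) (hr : Odd r) (x : Fin r → ℝ) :
    ∑ j : Fin r, (-1:ℝ)^(j:ℕ) * (((r+1).choose ((j:ℕ)+1)) : ℝ)
      * x ⟨r - 1 - (j:ℕ), by have := j.isLt; omega⟩ = headSum r x := by
  unfold headSum
  rw [← Equiv.sum_comp Fin.revPerm (fun j : Fin r =>
    (-1:ℝ)^(j:ℕ) * (((r+1).choose ((j:ℕ)+1)) : ℝ) * x j)]
  refine Finset.sum_congr rfl fun j _ => ?_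
  have hj := j.isLt
  have hrev : ((Fin.revPerm j : ℕ)) = r - 1 - (j : ℕ) := by
    simp [Fin.rev]; omega
  rw [show Fin.revPerm j = (⟨r - 1 - (j:ℕ), by omega⟩ : Fin r) from Fin.ext hrev]
  have hsign : (-1:ℝ)^(r - 1 - (j:ℕ)) = (-1:ℝ)^(j:ℕ) := by
    have h1 : (-1:ℝ)^(r - 1 - (j:ℕ)) * (-1:ℝ)^(j:ℕ) = 1 := by
      rw [← pow_add]
      have : r - 1 - (j:ℕ) + (j:ℕ) = r - 1 := by omega
      rw [this]
      obtain ⟨k, hk⟩ := hr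
      subst hk
      simp [pow_succ, pow_mul]
    have h2 : (-1:ℝ)^(j:ℕ) * (-1:ℝ)^(j:ℕ) = 1 := by
      rw [← pow_add, ← two_mul, pow_mul]; norm_num
    calc (-1:ℝ)^(r - 1 - (j:ℕ)) = (-1:ℝ)^(r - 1 - (j:ℕ)) * ((-1:ℝ)^(j:ℕ) * (-1:ℝ)^(j:ℕ)) := by
          rw [h2, mul_one]
      _ = ((-1:ℝ)^(r - 1 - (j:ℕ)) * (-1:ℝ)^(j:ℕ)) * (-1:ℝ)^(j:ℕ) := by ring
      _ = (-1:ℝ)^(j:ℕ) := by rw [h1, one_mul]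
  have hch : (r+1).choose (r - 1 - (j:ℕ) + 1) = (r+1).choose ((j:ℕ)+1) := by
    have : r - 1 - (j:ℕ) + 1 = (r + 1) - ((j:ℕ) + 1) := by omega
    rw [this, Nat.choose_symm (by omega)]
  rw [hsign, hch]

lemma headSum_mapB (r : ℕ) (hr : Odd r) (c : ℝ) (x : Fin r → ℝ) :
    headSum r (mapB r c x) = headSum r x + 2 * c := by
  unfold headSum mapB
  have expand : ∀ j : Fin r,
      (-1:ℝ)^(j:ℕ) * (((r+1).choose ((j:ℕ)+1)) : ℝ)
        * (headSum r x - x ⟨r - 1 - (j:ℕ), by have := j.isLt; omega⟩ + c)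
      = (-1:ℝ)^(j:ℕ) * (((r+1).choose ((j:ℕ)+1)) : ℝ) * (headSum r x + c)
        - (-1:ℝ)^(j:ℕ) * (((r+1).choose ((j:ℕ)+1)) : ℝ)
          * x ⟨r - 1 - (j:ℕ), by have := j.isLt; omega⟩ := fun j => by ring
  rw [Finset.sum_congr rfl (fun j _ => expand j), Finset.sum_sub_distrib,
    revSum r hr x, ← Finset.sum_mul, coefSum r hr]
  unfold headSum
  ring

/-- For odd `r`, the identity `θ ∘ R_c ∘ A = R_{-c} ∘ A ∘ B_c` holds. -/
theorem stmt15 (r : ℕ) (hr : Odd r) (c : ℝ) (x : Fin r → ℝ) :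
    mapTheta r (mapR r c (mapA r x)) = mapR r (-c) (mapA r (mapB r c x)) := by
  funext i
  refine Fin.cases ?_ ?_ i
  · simp [mapTheta, mapR, mapA, headSum_mapB r hr c x]
    ring
  · intro j
    have hj := j.isLt
    simp only [mapTheta, mapR, mapA, Fin.cons_succ, Fin.cons_zero]
    have hidx : (⟨r - (j:ℕ), by omega⟩ : Fin (r+1))
        = Fin.succ (⟨r - 1 - (j:ℕ), by omega⟩ : Fin r) := by
      apply Fin.ext
      simp [Fin.val_succ]; omega
    rw [hidx]
    simp only [Fin.cons_succ]
    simp [mapB]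
    ring
end
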